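/- arXiv:1808.06956 — 6 statements merged into one kernel-verified Lean document; each statement's English description precedes it below -/
import Mathlib

section
/- For every graph L with m := e(L) edges, there is an edge-bijective homomorphism from ∇∇L to the canonical graph L_m. -/
/-- `φ` is an edge-bijective homomorphism from `H` to `H'`: it maps edges to edges,
`e(H) = e(H')`, and the image of the edge set of `H` has size `e(H')`. -/
def EdgeBijectiveHom {V W : Type*} (H : SimpleGraph V) (H' : SimpleGraph W)
    (φ : V → W) : Prop :=
  (∀ x y, H.Adj x y → H'.Adj (φ x) (φ y)) ∧
  H.edgeSet.ncard = H'.edgeSet.ncard ∧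
  (Sym2.map φ '' H.edgeSet).ncard = H'.edgeSet.ncard

/-- The graph `∇L`, obtained from `L` by replacing every edge `e = xy` by a path
`x zₑ y` of length 2 (through a new vertex `zₑ`); the original edges are removed. -/
def nabla {V : Type*} (L : SimpleGraph V) : SimpleGraph (V ⊕ L.edgeSet) :=
  SimpleGraph.fromRel (fun a b =>
    ∃ (x : V) (e : L.edgeSet), a = Sum.inl x ∧ b = Sum.inr e ∧ x ∈ (e : Sym2 V))

/-- The canonical graph `L_m`, with vertices `v* = 0` and `v₁, …, v_{3m}` and edges
`v* v_{3i−2}, v_{3i−2} v_{3i−1}, v_{3i−1} v_{3i}, v_{3i} v*` for `i ∈ [m]`. -/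
def canonicalGraph (m : ℕ) : SimpleGraph (Fin (3 * m + 1)) :=
  SimpleGraph.fromRel (fun a b =>
    ∃ i : ℕ, 1 ≤ i ∧ i ≤ m ∧
      (((a : ℕ) = 0 ∧ (b : ℕ) = 3 * i - 2) ∨
       ((a : ℕ) = 3 * i - 2 ∧ (b : ℕ) = 3 * i - 1) ∨
       ((a : ℕ) = 3 * i - 1 ∧ (b : ℕ) = 3 * i) ∨
       ((a : ℕ) = 3 * i ∧ (b : ℕ) = 0)))

noncomputable section
namespace NNProof
open Sum
open scoped Classical

lemma sym2_exists_pair {V : Type*} (s : Sym2 V) : ∃ p : V × V, s = s(p.1, p.2) := by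
  induction s using Sym2.ind with
  | _ x y => exact ⟨(x, y), rfl⟩

def pfst {V : Type*} (s : Sym2 V) : V := (Classical.choose (sym2_exists_pair s)).1
def psnd {V : Type*} (s : Sym2 V) : V := (Classical.choose (sym2_exists_pair s)).2

lemma pair_spec {V : Type*} (s : Sym2 V) : s = s(pfst s, psnd s) :=
  Classical.choose_spec (sym2_exists_pair s)

variable {V : Type*} (L : SimpleGraph V) {m : ℕ} (ι : L.edgeSet ≃ Fin m)

lemma nabla_adj {a b : V ⊕ L.edgeSet} :
    (nabla L).Adj a b ↔ ∃ (x : V) (e : L.edgeSet), x ∈ (e : Sym2 V) ∧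
      ((a = inl x ∧ b = inr e) ∨ (a = inr e ∧ b = inl x)) := by
  rw [nabla, SimpleGraph.fromRel_adj]
  constructor
  · rintro ⟨hne, ⟨x, e, rfl, rfl, hx⟩ | ⟨x, e, rfl, rfl, hx⟩⟩
    · exact ⟨x, e, hx, Or.inl ⟨rfl, rfl⟩⟩
    · exact ⟨x, e, hx, Or.inr ⟨rfl, rfl⟩⟩
  · rintro ⟨x, e, hx, ⟨rfl, rfl⟩ | ⟨rfl, rfl⟩⟩
    · exact ⟨by simp, Or.inl ⟨x, e, rfl, rfl, hx⟩⟩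
    · exact ⟨by simp, Or.inr ⟨x, e, rfl, rfl, hx⟩⟩

lemma nabla_edge_mem_decomp (s : Sym2 (V ⊕ L.edgeSet)) (hs : s ∈ (nabla L).edgeSet) :
    ∃ (x : V) (e : L.edgeSet), x ∈ (e : Sym2 V) ∧ s = s(inl x, inr e) := by
  revert hs
  induction s using Sym2.ind with
  | _ a b =>
    intro hs
    rw [SimpleGraph.mem_edgeSet, nabla_adj] at hs
    obtain ⟨x, e, hx, ⟨rfl, rfl⟩ | ⟨rfl, rfl⟩⟩ := hs
    · exact ⟨x, e, hx, rfl⟩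
    · exact ⟨x, e, hx, Sym2.eq_swap⟩

lemma nabla_edge_decomp (z : (nabla L).edgeSet) :
    ∃ (x : V) (e : L.edgeSet), x ∈ (e : Sym2 V) ∧
      (z : Sym2 (V ⊕ L.edgeSet)) = s(inl x, inr e) :=
  nabla_edge_mem_decomp L z.1 z.2

def vval : (V ⊕ L.edgeSet) → ℕ
  | inl _ => 0
  | inr e => 3 * (ι e : ℕ) + 2

def pairVal : (V ⊕ L.edgeSet) → (V ⊕ L.edgeSet) → ℕ
  | inl x, inr e => 3 * (ι e : ℕ) + (if x = pfst (e : Sym2 V) then 1 else 3)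
  | inr e, inl x => 3 * (ι e : ℕ) + (if x = pfst (e : Sym2 V) then 1 else 3)
  | _, _ => 0

lemma pairVal_symm : ∀ a b, pairVal L ι a b = pairVal L ι b a := by
  rintro (x | e) (y | f) <;> rfl

def phi : (V ⊕ L.edgeSet) ⊕ (nabla L).edgeSet → Fin (3 * m + 1)
  | inl w => ⟨vval L ι w % (3 * m + 1), Nat.mod_lt _ (Nat.succ_pos _)⟩
  | inr z => ⟨Sym2.lift ⟨pairVal L ι, pairVal_symm L ι⟩ (z : Sym2 (V ⊕ L.edgeSet)) % (3 * m + 1),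
      Nat.mod_lt _ (Nat.succ_pos _)⟩

lemma phi_inl_inl (x : V) : (phi L ι (inl (inl x)) : ℕ) = 0 := by
  simp [phi, vval]

lemma phi_inl_inr (e : L.edgeSet) : (phi L ι (inl (inr e)) : ℕ) = 3 * (ι e : ℕ) + 2 := by
  have h : (ι e : ℕ) < m := (ι e).isLt
  show vval L ι (inr e) % (3 * m + 1) = _
  show (3 * (ι e : ℕ) + 2) % (3 * m + 1) = _
  exact Nat.mod_eq_of_lt (by omega)

lemma phi_inr {z : (nabla L).edgeSet} {x : V} {e : L.edgeSet}
    (hz : (z : Sym2 (V ⊕ L.edgeSet)) = s(inl x, inr e)) :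
    (phi L ι (inr z) : ℕ) = 3 * (ι e : ℕ) + (if x = pfst (e : Sym2 V) then 1 else 3) := by
  have h : (ι e : ℕ) < m := (ι e).isLt
  show Sym2.lift ⟨pairVal L ι, pairVal_symm L ι⟩ (z : Sym2 (V ⊕ L.edgeSet)) % (3 * m + 1) = _
  rw [hz, Sym2.lift_mk]
  show pairVal L ι (inl x) (inr e) % (3 * m + 1) = _
  show (3 * (ι e : ℕ) + (if x = pfst (e : Sym2 V) then 1 else 3)) % (3 * m + 1) = _
  exact Nat.mod_eq_of_lt (by split <;> omega)

lemma phi_inr_cases (z : (nabla L).edgeSet) :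
    ∃ k : ℕ, ((phi L ι (inr z) : ℕ) = 3 * k + 1 ∨ (phi L ι (inr z) : ℕ) = 3 * k + 3) := by
  obtain ⟨x, e, hx, hz⟩ := nabla_edge_decomp L z
  refine ⟨(ι e : ℕ), ?_⟩
  rw [phi_inr L ι hz]
  split <;> simp

lemma phi_inl_cases (w : V ⊕ L.edgeSet) :
    (phi L ι (inl w) : ℕ) = 0 ∨ ∃ k, (phi L ι (inl w) : ℕ) = 3 * k + 2 := by
  cases w with
  | inl x => exact Or.inl (phi_inl_inl L ι x)
  | inr e => exact Or.inr ⟨_, phi_inl_inr L ι e⟩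

lemma mem_ne_fst {x : V} {e : L.edgeSet} (hx : x ∈ (e : Sym2 V))
    (hne : x ≠ pfst (e : Sym2 V)) : x = psnd (e : Sym2 V) := by
  have h := pair_spec (e : Sym2 V)
  rw [h, Sym2.mem_iff] at hx
  tauto

lemma mem_z_inl {z : (nabla L).edgeSet} {x : V} {e : L.edgeSet}
    (hz : (z : Sym2 (V ⊕ L.edgeSet)) = s(inl x, inr e)) {a : V}
    (ha : Sum.inl a ∈ (z : Sym2 (V ⊕ L.edgeSet))) : a = x := by
  rw [hz, Sym2.mem_iff] at ha
  rcases ha with h | h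
  · exact Sum.inl_injective h
  · simp at h

lemma key_adj (w : V ⊕ L.edgeSet) (z : (nabla L).edgeSet)
    (hw : w ∈ (z : Sym2 (V ⊕ L.edgeSet))) :
    (canonicalGraph m).Adj (phi L ι (inl w)) (phi L ι (inr z)) := by
  obtain ⟨x, e, hx, hz⟩ := nabla_edge_decomp L z
  have hm : (ι e : ℕ) < m := (ι e).isLt
  have hz' := phi_inr L ι hz
  rw [hz, Sym2.mem_iff] at hw
  rw [canonicalGraph, SimpleGraph.fromRel_adj]
  rcases hw with rfl | rfl
  · have h0 := phi_inl_inl L ι x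
    by_cases hc : x = pfst (e : Sym2 V)
    · rw [if_pos hc] at hz'
      exact ⟨fun h => by apply_fun Fin.val at h; omega,
        Or.inl ⟨(ι e : ℕ) + 1, by omega, by omega, Or.inl ⟨by omega, by omega⟩⟩⟩
    · rw [if_neg hc] at hz'
      exact ⟨fun h => by apply_fun Fin.val at h; omega,
        Or.inr ⟨(ι e : ℕ) + 1, by omega, by omega,
          Or.inr (Or.inr (Or.inr ⟨by omega, by omega⟩))⟩⟩
  · have h0 := phi_inl_inr L ι e
    by_cases hc : x = pfst (e : Sym2 V)
    · rw [if_pos hc] at hz'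
      exact ⟨fun h => by apply_fun Fin.val at h; omega,
        Or.inr ⟨(ι e : ℕ) + 1, by omega, by omega, Or.inr (Or.inl ⟨by omega, by omega⟩)⟩⟩
    · rw [if_neg hc] at hz'
      exact ⟨fun h => by apply_fun Fin.val at h; omega,
        Or.inl ⟨(ι e : ℕ) + 1, by omega, by omega,
          Or.inr (Or.inr (Or.inl ⟨by omega, by omega⟩))⟩⟩

lemma phi_inr_injective :
    Function.Injective fun z : (nabla L).edgeSet => phi L ι (inr z) := by
  intro z1 z2 h
  obtain ⟨x1, e1, hx1, hz1⟩ := nabla_edge_decomp L z1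
  obtain ⟨x2, e2, hx2, hz2⟩ := nabla_edge_decomp L z2
  have h1 := phi_inr L ι hz1
  have h2 := phi_inr L ι hz2
  have h' : (phi L ι (inr z1) : ℕ) = (phi L ι (inr z2) : ℕ) := congrArg Fin.val h
  rw [h1, h2] at h'
  have hee : e1 = e2 := by
    apply ι.injective
    apply Fin.ext
    split at h' <;> split at h' <;> omega
  subst hee
  have hiff : x1 = pfst (e1 : Sym2 V) ↔ x2 = pfst (e1 : Sym2 V) := by
    constructor <;> intro hh <;> by_contra hh2
    · rw [if_pos hh, if_neg hh2] at h'; omega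
    · rw [if_neg hh2, if_pos hh] at h'; omega
  have hx12 : x1 = x2 := by
    by_cases hc : x1 = pfst (e1 : Sym2 V)
    · exact hc.trans (hiff.mp hc).symm
    · exact (mem_ne_fst L hx1 hc).trans (mem_ne_fst L hx2 (fun hh => hc (hiff.mpr hh))).symm
  exact Subtype.ext (by rw [hz1, hz2, hx12])

lemma edge_parts (e : L.edgeSet) : ∃ x y : V, (e : Sym2 V) = s(x, y) ∧ x ≠ y ∧
    x = pfst (e : Sym2 V) ∧ x ∈ (e : Sym2 V) ∧ y ∈ (e : Sym2 V) := by
  refine ⟨pfst (e : Sym2 V), psnd (e : Sym2 V), pair_spec _, ?_, rfl, ?_, ?_⟩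
  · have he := e.2
    rw [show (e : Sym2 V) = s(pfst (e : Sym2 V), psnd (e : Sym2 V)) from pair_spec _,
      SimpleGraph.mem_edgeSet] at he
    exact he.ne
  · have h := Sym2.mem_mk_left (pfst (e : Sym2 V)) (psnd (e : Sym2 V))
    rwa [← pair_spec] at h
  · have h := Sym2.mem_mk_right (pfst (e : Sym2 V)) (psnd (e : Sym2 V))
    rwa [← pair_spec] at h

lemma surj_aux (a b : Fin (3 * m + 1))
    (h : ∃ i : ℕ, 1 ≤ i ∧ i ≤ m ∧
      (((a : ℕ) = 0 ∧ (b : ℕ) = 3 * i - 2) ∨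
       ((a : ℕ) = 3 * i - 2 ∧ (b : ℕ) = 3 * i - 1) ∨
       ((a : ℕ) = 3 * i - 1 ∧ (b : ℕ) = 3 * i) ∨
       ((a : ℕ) = 3 * i ∧ (b : ℕ) = 0))) :
    s(a, b) ∈ Sym2.map (phi L ι) '' (nabla (nabla L)).edgeSet := by
  obtain ⟨i, hi1, hi2, hpat⟩ := h
  set e : L.edgeSet := ι.symm ⟨i - 1, by omega⟩ with he
  have hιe : (ι e : ℕ) = i - 1 := by rw [he, Equiv.apply_symm_apply]
  obtain ⟨x, y, hxy, hne, hxf, hxe, hye⟩ := edge_parts L e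
  have hz1adj : (nabla L).Adj (inl x) (inr e) := by
    rw [nabla_adj]; exact ⟨x, e, hxe, Or.inl ⟨rfl, rfl⟩⟩
  have hz2adj : (nabla L).Adj (inl y) (inr e) := by
    rw [nabla_adj]; exact ⟨y, e, hye, Or.inl ⟨rfl, rfl⟩⟩
  set z1 : (nabla L).edgeSet := ⟨s(inl x, inr e), hz1adj⟩ with hz1def
  set z2 : (nabla L).edgeSet := ⟨s(inl y, inr e), hz2adj⟩ with hz2def
  have hz1v : (z1 : Sym2 (V ⊕ L.edgeSet)) = s(inl x, inr e) := rfl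
  have hz2v : (z2 : Sym2 (V ⊕ L.edgeSet)) = s(inl y, inr e) := rfl
  have hv1 : (phi L ι (inr z1) : ℕ) = 3 * (i - 1) + 1 := by
    rw [phi_inr L ι hz1v, if_pos hxf, hιe]
  have hv2 : (phi L ι (inr z2) : ℕ) = 3 * (i - 1) + 3 := by
    rw [phi_inr L ι hz2v, if_neg (fun hh => hne (hxf.trans hh.symm)), hιe]
  have hvE : (phi L ι (inl (inr e)) : ℕ) = 3 * (i - 1) + 2 := by
    rw [phi_inl_inr, hιe]
  have hm1 : s(inl (inl x), inr z1) ∈ (nabla (nabla L)).edgeSet := by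
    rw [SimpleGraph.mem_edgeSet, nabla_adj]
    exact ⟨inl x, z1, by rw [hz1v]; exact Sym2.mem_mk_left _ _, Or.inl ⟨rfl, rfl⟩⟩
  have hm2 : s(inl (inr e), inr z1) ∈ (nabla (nabla L)).edgeSet := by
    rw [SimpleGraph.mem_edgeSet, nabla_adj]
    exact ⟨inr e, z1, by rw [hz1v]; exact Sym2.mem_mk_right _ _, Or.inl ⟨rfl, rfl⟩⟩
  have hm3 : s(inl (inr e), inr z2) ∈ (nabla (nabla L)).edgeSet := by
    rw [SimpleGraph.mem_edgeSet, nabla_adj]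
    exact ⟨inr e, z2, by rw [hz2v]; exact Sym2.mem_mk_right _ _, Or.inl ⟨rfl, rfl⟩⟩
  have hm4 : s(inl (inl y), inr z2) ∈ (nabla (nabla L)).edgeSet := by
    rw [SimpleGraph.mem_edgeSet, nabla_adj]
    exact ⟨inl y, z2, by rw [hz2v]; exact Sym2.mem_mk_left _ _, Or.inl ⟨rfl, rfl⟩⟩
  have h0x := phi_inl_inl L ι x
  have h0y := phi_inl_inl L ι y
  rcases hpat with ⟨ha, hb⟩ | ⟨ha, hb⟩ | ⟨ha, hb⟩ | ⟨ha, hb⟩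
  · refine ⟨s(inl (inl x), inr z1), hm1, ?_⟩
    rw [Sym2.map_pair_eq, Sym2.eq_iff]
    exact Or.inl ⟨Fin.ext (by omega), Fin.ext (by omega)⟩
  · refine ⟨s(inl (inr e), inr z1), hm2, ?_⟩
    rw [Sym2.map_pair_eq, Sym2.eq_iff]
    exact Or.inr ⟨Fin.ext (by omega), Fin.ext (by omega)⟩
  · refine ⟨s(inl (inr e), inr z2), hm3, ?_⟩
    rw [Sym2.map_pair_eq, Sym2.eq_iff]
    exact Or.inl ⟨Fin.ext (by omega), Fin.ext (by omega)⟩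
  · refine ⟨s(inl (inl y), inr z2), hm4, ?_⟩
    rw [Sym2.map_pair_eq, Sym2.eq_iff]
    exact Or.inr ⟨Fin.ext (by omega), Fin.ext (by omega)⟩

lemma main_injOn : Set.InjOn (Sym2.map (phi L ι)) (nabla (nabla L)).edgeSet := by
  intro s1 hs1 s2 hs2 heq
  obtain ⟨w1, z1, hw1, hd1⟩ := nabla_edge_mem_decomp (nabla L) s1 hs1
  obtain ⟨w2, z2, hw2, hd2⟩ := nabla_edge_mem_decomp (nabla L) s2 hs2
  rw [hd1, hd2, Sym2.map_pair_eq, Sym2.map_pair_eq, Sym2.eq_iff] at heq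
  rw [hd1, hd2]
  rcases heq with ⟨hA, hB⟩ | ⟨hA, hB⟩
  · -- aligned
    have hz12 : z1 = z2 := phi_inr_injective L ι hB
    subst hz12
    obtain ⟨x1, e1, hx1, hz1⟩ := nabla_edge_decomp L z1
    have hw12 : w1 = w2 := by
      cases w1 with
      | inl a =>
        cases w2 with
        | inl b =>
          rw [mem_z_inl L hz1 hw1, mem_z_inl L hz1 hw2]
        | inr g =>
          have p1 := phi_inl_inl L ι a
          have p2 := phi_inl_inr L ι g
          apply_fun Fin.val at hA
          omega
      | inr f =>
        cases w2 with
        | inl b =>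
          have p1 := phi_inl_inr L ι f
          have p2 := phi_inl_inl L ι b
          apply_fun Fin.val at hA
          omega
        | inr g =>
          have p1 := phi_inl_inr L ι f
          have p2 := phi_inl_inr L ι g
          apply_fun Fin.val at hA
          have : ι f = ι g := Fin.ext (by omega)
          rw [ι.injective this]
    rw [hw12]
  · -- crossed: impossible
    exfalso
    obtain ⟨k, hk⟩ := phi_inr_cases L ι z2
    apply_fun Fin.val at hA
    rcases phi_inl_cases L ι w1 with hw | ⟨k', hw⟩ <;> rcases hk with hk | hk <;> omega

end NNProof
end

/-- For every graph `L` with `m := e(L)` edges, there is an edge-bijective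
homomorphism from `∇∇L` to the canonical graph `L_m`. -/
theorem nabla_nabla_to_canonical {V : Type*} [Fintype V] (L : SimpleGraph V) :
    ∃ φ : (V ⊕ L.edgeSet) ⊕ (nabla L).edgeSet → Fin (3 * L.edgeSet.ncard + 1),
      EdgeBijectiveHom (nabla (nabla L)) (canonicalGraph L.edgeSet.ncard) φ := by
  classical
  obtain ι : L.edgeSet ≃ Fin L.edgeSet.ncard :=
    Finite.equivFinOfCardEq (Nat.card_coe_set_eq _)
  set m := L.edgeSet.ncard with hm
  have hhom : ∀ a b, (nabla (nabla L)).Adj a b →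
      (canonicalGraph m).Adj (NNProof.phi L ι a) (NNProof.phi L ι b) := by
    intro a b hab
    rw [NNProof.nabla_adj] at hab
    obtain ⟨w, z, hw, ⟨rfl, rfl⟩ | ⟨rfl, rfl⟩⟩ := hab
    · exact NNProof.key_adj L ι w z hw
    · exact (NNProof.key_adj L ι w z hw).symm
  have himg : Sym2.map (NNProof.phi L ι) '' (nabla (nabla L)).edgeSet
      = (canonicalGraph m).edgeSet := by
    apply Set.Subset.antisymm
    · rintro s ⟨t, ht, rfl⟩
      revert ht
      induction t using Sym2.ind with
      | _ a b =>
        intro ht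
        rw [SimpleGraph.mem_edgeSet] at ht
        rw [Sym2.map_pair_eq, SimpleGraph.mem_edgeSet]
        exact hhom a b ht
    · intro s hs
      induction s using Sym2.ind with
      | _ a b =>
        rw [SimpleGraph.mem_edgeSet, canonicalGraph, SimpleGraph.fromRel_adj] at hs
        obtain ⟨hne, hrel | hrel⟩ := hs
        · exact NNProof.surj_aux L ι a b hrel
        · rw [Sym2.eq_swap]
          exact NNProof.surj_aux L ι b a hrel
  refine ⟨NNProof.phi L ι, ?_⟩
  unfold EdgeBijectiveHom
  refine ⟨hhom, ?_, by rw [himg]⟩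
  rw [← himg, Set.ncard_image_of_injOn (NNProof.main_injOn L ι)]
end

section
/- Let δ ∈ [0,1] and 0 < ε < 1. Then there exists m₀′ ∈ ℕ such that for all m′ ≥ m₀′ the following holds: if G is a graph on n ≥ m′ vertices with minimum degree δ(G) ≥ δn, then G has a (δ − ε, ε, m)-vortex for some m with ⌊εm′⌋ ≤ m ≤ m′. -/
open Finset
set_option maxHeartbeats 1600000

lemma cast_choose_mul_factorial {n k : ℕ} (h : k ≤ n) :
    (n.choose k : ℝ) * (k.factorial : ℝ) = ∏ i ∈ range k, ((n:ℝ) - i) := by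
  induction k with
  | zero => simp
  | succ k ih =>
    have hk : k ≤ n := Nat.le_of_succ_le h
    have hrec := Nat.choose_succ_right_eq n k
    have hcast : ((n.choose (k+1) : ℝ)) * ((k:ℝ)+1) = (n.choose k : ℝ) * ((n:ℝ) - k) := by
      have := congrArg (fun t : ℕ => (t : ℝ)) hrec
      push_cast [Nat.cast_sub hk] at this
      linarith [this]
    rw [prod_range_succ, ← ih hk, Nat.factorial_succ]
    push_cast
    nlinarith [hcast]

lemma choose_identity {k s N : ℕ} (h1 : k ≤ s) (h2 : s ≤ N) :
    (N.choose s : ℝ) * (s.choose k : ℝ) = (N.choose k : ℝ) * ((N - k).choose (s - k) : ℝ) := by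
  have hkN : k ≤ N := le_trans h1 h2
  have hsk : s - k ≤ N - k := Nat.sub_le_sub_right h2 k
  rw [Nat.cast_choose (K := ℝ) h2, Nat.cast_choose (K := ℝ) h1, Nat.cast_choose (K := ℝ) hkN,
    Nat.cast_choose (K := ℝ) hsk]
  have e1 : N - k - (s - k) = N - s := by omega
  rw [e1]
  have f1 : (s.factorial : ℝ) ≠ 0 := by positivity
  have f2 : ((N - s).factorial : ℝ) ≠ 0 := by positivity
  have f3 : (k.factorial : ℝ) ≠ 0 := by positivity
  have f4 : ((s - k).factorial : ℝ) ≠ 0 := by positivity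
  have f5 : ((N - k).factorial : ℝ) ≠ 0 := by positivity
  field_simp

lemma numericR (N s k a e : ℕ) (γ : ℝ) (hγ : 0 ≤ γ) (hN : 0 < N)
    (hks : k ≤ s) (hsN : s ≤ N) (hka : k ≤ a) (has : a ≤ s) (heN : e ≤ N)
    (h1 : (e:ℝ) * s * (1+γ/4) ≤ (N:ℝ) * ((a:ℝ) - k + 1))
    (h2 : (N:ℝ) < (1+γ/4)^k) :
    (N:ℝ) * (e.choose k) * ((N-k).choose (s-k)) < (N.choose s) * (a.choose k) := by
  have hkN : k ≤ N := hks.trans hsN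
  have hp1 : (0:ℝ) < (s.choose k : ℝ) := by exact_mod_cast Nat.choose_pos hks
  have hp2 : (0:ℝ) < ((N-k).choose (s-k) : ℝ) := by
    exact_mod_cast Nat.choose_pos (Nat.sub_le_sub_right hsN k)
  have hp3 : (0:ℝ) < (N.choose k : ℝ) := by exact_mod_cast Nat.choose_pos hkN
  have hp4 : (0:ℝ) < (a.choose k : ℝ) := by exact_mod_cast Nat.choose_pos hka
  have hNR : (0:ℝ) < (N:ℝ) := by exact_mod_cast hN
  have hkaR : (k:ℝ) ≤ (a:ℝ) := by exact_mod_cast hka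
  have hak1 : (1:ℝ) ≤ (a:ℝ) - k + 1 := by linarith
  have key : (N:ℝ) * (e.choose k) * (s.choose k) < (N.choose k) * (a.choose k) := by
    rcases lt_or_ge e k with hek | hke
    · have hz : e.choose k = 0 := Nat.choose_eq_zero_of_lt hek
      simpa [hz] using mul_pos hp3 hp4
    · have hdpos : (0:ℝ) < (N:ℝ) * ((a:ℝ) - k + 1) := by positivity
      set r : ℝ := (e:ℝ) * s / ((N:ℝ) * ((a:ℝ) - k + 1)) with hrdef
      have hr0 : 0 ≤ r := by
        apply div_nonneg _ (le_of_lt hdpos); positivity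
      have hrle : r * (1+γ/4) ≤ 1 := by
        rw [hrdef, div_mul_eq_mul_div, div_le_one hdpos]; linarith [h1]
      have hfnn : ∀ i ∈ range k, 0 ≤ ((e:ℝ) - i) * ((s:ℝ) - i) := by
        intro i hi
        have hik : i < k := mem_range.mp hi
        have h1' : (i:ℝ) ≤ e := by exact_mod_cast le_of_lt (lt_of_lt_of_le hik hke)
        have h2' : (i:ℝ) ≤ s := by exact_mod_cast le_of_lt (lt_of_lt_of_le hik hks)
        exact mul_nonneg (by linarith) (by linarith)
      have hfacb : ∀ i ∈ range k, ((e:ℝ) - i) * ((s:ℝ) - i) ≤ r * (((N:ℝ) - i) * ((a:ℝ) - i)) := by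
        intro i hi
        have hik : i < k := mem_range.mp hi
        have hie : (i:ℝ) ≤ e := by exact_mod_cast le_of_lt (lt_of_lt_of_le hik hke)
        have his : (i:ℝ) ≤ s := by exact_mod_cast le_of_lt (lt_of_lt_of_le hik hks)
        have hiN : (i:ℝ) ≤ N := by exact_mod_cast le_of_lt (lt_of_lt_of_le hik hkN)
        have hia : (i:ℝ) + 1 ≤ k := by exact_mod_cast hik
        have heNR : (e:ℝ) ≤ N := by exact_mod_cast heN
        have hiaR : (i:ℝ) ≤ a := by exact_mod_cast le_of_lt (lt_of_lt_of_le hik hka)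
        rw [hrdef, div_mul_eq_mul_div, le_div_iff₀ hdpos]
        have A : ((e:ℝ) - i) * N ≤ (e:ℝ) * ((N:ℝ) - i) := by
          have h := mul_le_mul_of_nonneg_right heNR (Nat.cast_nonneg (α := ℝ) i)
          nlinarith [h]
        have B : ((s:ℝ) - i) * ((a:ℝ) - k + 1) ≤ (s:ℝ) * ((a:ℝ) - i) := by
          apply mul_le_mul (by linarith) (by linarith) (by linarith) (by positivity)
        have A0 : (0:ℝ) ≤ ((e:ℝ) - i) * N := mul_nonneg (by linarith) (by positivity)
        have B0 : (0:ℝ) ≤ (s:ℝ) * ((a:ℝ) - i) := mul_nonneg (by positivity) (by linarith)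
        calc ((e:ℝ) - i) * ((s:ℝ) - i) * ((N:ℝ) * ((a:ℝ) - k + 1))
            = (((e:ℝ) - i) * N) * (((s:ℝ) - i) * ((a:ℝ) - k + 1)) := by ring
          _ ≤ ((e:ℝ) * ((N:ℝ) - i)) * ((s:ℝ) * ((a:ℝ) - i)) := by
              apply mul_le_mul A B (by
                apply mul_nonneg (by linarith [hfnn i hi]) (by linarith)) (by
                apply mul_nonneg (by positivity) (by linarith))
          _ = (e:ℝ) * s * (((N:ℝ) - i) * ((a:ℝ) - i)) := by ring
      have prodle : ∏ i ∈ range k, (((e:ℝ) - i) * ((s:ℝ) - i)) ≤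
          ∏ i ∈ range k, (r * (((N:ℝ) - i) * ((a:ℝ) - i))) :=
        Finset.prod_le_prod hfnn hfacb
      have prodsplit : ∏ i ∈ range k, (r * (((N:ℝ) - i) * ((a:ℝ) - i))) =
          r^k * ∏ i ∈ range k, (((N:ℝ) - i) * ((a:ℝ) - i)) := by
        rw [Finset.prod_mul_distrib, prod_const, card_range]
      have prodpos : 0 < ∏ i ∈ range k, (((N:ℝ) - i) * ((a:ℝ) - i)) := by
        apply Finset.prod_pos
        intro i hi
        have hik : i < k := mem_range.mp hi
        have hiN : (i:ℝ) < N := by exact_mod_cast lt_of_lt_of_le hik hkN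
        have hia : (i:ℝ) < a := by exact_mod_cast lt_of_lt_of_le hik hka
        exact mul_pos (by linarith) (by linarith)
      have h14 : (0:ℝ) < 1 + γ/4 := by linarith
      have hNrk : (N:ℝ) * r^k < 1 := by
        have hr14 : r ≤ 1/(1+γ/4) := by rw [le_div_iff₀ h14]; linarith
        have hrpow : r^k ≤ (1/(1+γ/4))^k := pow_le_pow_left₀ hr0 hr14 k
        have : (N:ℝ) * r^k ≤ (N:ℝ) * (1/(1+γ/4))^k := by
          apply mul_le_mul_of_nonneg_left hrpow (le_of_lt hNR)
        have e2 : (N:ℝ) * (1/(1+γ/4))^k = (N:ℝ) / (1+γ/4)^k := by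
          rw [one_div, inv_pow]; ring
        have : (N:ℝ) * (1/(1+γ/4))^k < 1 := by
          rw [e2, div_lt_one (pow_pos h14 k)]; exact h2
        linarith
      -- now multiply everything out
      have hfk : (0:ℝ) < (k.factorial : ℝ) := by positivity
      have Pe := cast_choose_mul_factorial (n := e) hke
      have Ps := cast_choose_mul_factorial (n := s) hks
      have PN := cast_choose_mul_factorial (n := N) hkN
      have Pa := cast_choose_mul_factorial (n := a) hka
      have combine1 : ((e.choose k : ℝ) * k.factorial) * ((s.choose k : ℝ) * k.factorial) =
          ∏ i ∈ range k, (((e:ℝ) - i) * ((s:ℝ) - i)) := by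
        rw [Pe, Ps, ← Finset.prod_mul_distrib]
      have combine2 : ((N.choose k : ℝ) * k.factorial) * ((a.choose k : ℝ) * k.factorial) =
          ∏ i ∈ range k, (((N:ℝ) - i) * ((a:ℝ) - i)) := by
        rw [PN, Pa, ← Finset.prod_mul_distrib]
      have final : ((N:ℝ) * (e.choose k) * (s.choose k)) * (k.factorial * k.factorial) <
          ((N.choose k) * (a.choose k)) * (k.factorial * k.factorial) := by
        calc ((N:ℝ) * (e.choose k) * (s.choose k)) * (k.factorial * k.factorial)
            = (N:ℝ) * (((e.choose k : ℝ) * k.factorial) * ((s.choose k : ℝ) * k.factorial)) := by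
              ring
          _ = (N:ℝ) * ∏ i ∈ range k, (((e:ℝ) - i) * ((s:ℝ) - i)) := by rw [combine1]
          _ ≤ (N:ℝ) * (r^k * ∏ i ∈ range k, (((N:ℝ) - i) * ((a:ℝ) - i))) := by
              rw [← prodsplit]; exact mul_le_mul_of_nonneg_left prodle (le_of_lt hNR)
          _ = ((N:ℝ) * r^k) * ∏ i ∈ range k, (((N:ℝ) - i) * ((a:ℝ) - i)) := by ring
          _ < 1 * ∏ i ∈ range k, (((N:ℝ) - i) * ((a:ℝ) - i)) := by
              exact mul_lt_mul_of_pos_right hNrk prodpos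
          _ = ((N.choose k : ℝ) * k.factorial) * ((a.choose k : ℝ) * k.factorial) := by
              rw [combine2]; ring
          _ = ((N.choose k : ℝ) * (a.choose k)) * (k.factorial * k.factorial) := by ring
      have hfk2 : (0:ℝ) < (k.factorial : ℝ) * k.factorial := by positivity
      exact lt_of_mul_lt_mul_right (by linarith [final]) (le_of_lt hfk2)
  -- conclude
  have step : ((N:ℝ) * (e.choose k) * ((N-k).choose (s-k))) * (s.choose k) <
      ((N.choose s : ℝ) * (a.choose k)) * (s.choose k) := by
    calc ((N:ℝ) * (e.choose k) * ((N-k).choose (s-k))) * (s.choose k)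
        = ((N:ℝ) * (e.choose k) * (s.choose k)) * ((N-k).choose (s-k)) := by ring
      _ < ((N.choose k : ℝ) * (a.choose k)) * ((N-k).choose (s-k)) :=
          mul_lt_mul_of_pos_right key hp2
      _ = ((N.choose k : ℝ) * ((N-k).choose (s-k))) * (a.choose k) := by ring
      _ = ((N.choose s : ℝ) * (s.choose k)) * (a.choose k) := by
          rw [← choose_identity hks hsN]
      _ = ((N.choose s : ℝ) * (a.choose k)) * (s.choose k) := by ring
  exact lt_of_mul_lt_mul_right step (le_of_lt hp1)

variable {α β : Type*} [DecidableEq α] [DecidableEq β]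

lemma card_supersets (V K : Finset α) (hK : K ⊆ V) (s : ℕ) (hks : K.card ≤ s) :
    ((powersetCard s V).filter (fun U => K ⊆ U)).card
      = (V.card - K.card).choose (s - K.card) := by
  rw [← card_sdiff_of_subset hK, ← Finset.card_powersetCard]
  apply Finset.card_bij (fun U _ => U \ K)
  · intro U hU
    simp only [mem_filter, mem_powersetCard] at hU
    obtain ⟨⟨hUV, hUcard⟩, hKU⟩ := hU
    rw [mem_powersetCard]
    constructor
    · exact sdiff_subset_sdiff hUV le_rfl
    · rw [card_sdiff_of_subset hKU, hUcard]
  · intro U1 h1 U2 h2 heq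
    simp only [mem_filter, mem_powersetCard] at h1 h2
    have e1 : U1 \ K ∪ K = U1 := sdiff_union_of_subset h1.2
    have e2 : U2 \ K ∪ K = U2 := sdiff_union_of_subset h2.2
    rw [← e1, ← e2, heq]
  · intro A hA
    rw [mem_powersetCard] at hA
    obtain ⟨hAV, hAcard⟩ := hA
    have hdisj : Disjoint A K := by
      apply Finset.disjoint_left.mpr
      intro x hx
      have := hAV hx
      simp only [mem_sdiff] at this
      exact this.2
    refine ⟨A ∪ K, ?_, ?_⟩
    · simp only [mem_filter, mem_powersetCard]
      refine ⟨⟨?_, ?_⟩, subset_union_right⟩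
      · apply union_subset _ hK
        exact hAV.trans (sdiff_subset)
      · rw [card_union_of_disjoint hdisj, hAcard]
        omega
    · rw [union_sdiff_right, sdiff_eq_self_of_disjoint hdisj]

lemma sum_choose_inter (V E : Finset α) (hE : E ⊆ V) (s k : ℕ) (hks : k ≤ s) :
    ∑ U ∈ powersetCard s V, ((U ∩ E).card.choose k)
      = (E.card.choose k) * ((V.card - k).choose (s - k)) := by
  have step1 : ∀ U ∈ powersetCard s V,
      (U ∩ E).card.choose k = ((powersetCard k E).filter (fun K => K ⊆ U)).card := by
    intro U _
    rw [← Finset.card_powersetCard]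
    congr 1
    ext K
    simp only [mem_powersetCard, mem_filter, subset_inter_iff]
    tauto
  rw [Finset.sum_congr rfl step1]
  simp only [Finset.card_filter]
  rw [Finset.sum_comm]
  have step2 : ∀ K ∈ powersetCard k E,
      (∑ U ∈ powersetCard s V, if K ⊆ U then 1 else 0)
        = (V.card - k).choose (s - k) := by
    intro K hK
    rw [mem_powersetCard] at hK
    rw [← Finset.card_filter]
    rw [card_supersets V K (hK.1.trans hE) s (by omega)]
    rw [hK.2]
  rw [Finset.sum_congr rfl step2, Finset.sum_const, Finset.card_powersetCard, smul_eq_mul,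
    mul_comm]

lemma selection (V : Finset α) (I : Finset β) (E : β → Finset α) (s k a : ℕ)
    (hE : ∀ x ∈ I, E x ⊆ V) (hsV : s ≤ V.card) (hks : k ≤ s) (hka : k ≤ a)
    (hsum : ∑ x ∈ I, (E x).card.choose k * ((V.card - k).choose (s - k))
      < V.card.choose s * a.choose k) :
    ∃ U ⊆ V, U.card = s ∧ ∀ x ∈ I, (U ∩ E x).card < a := by
  have key : ∑ U ∈ powersetCard s V, (∑ x ∈ I, ((U ∩ E x).card.choose k))
      < ∑ U ∈ powersetCard s V, a.choose k := by
    rw [Finset.sum_comm]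
    have lhs_eq : ∀ x ∈ I, ∑ U ∈ powersetCard s V, ((U ∩ E x).card.choose k)
        = (E x).card.choose k * ((V.card - k).choose (s - k)) := fun x hx =>
      sum_choose_inter V (E x) (hE x hx) s k hks
    rw [Finset.sum_congr rfl lhs_eq, Finset.sum_const, Finset.card_powersetCard, smul_eq_mul]
    exact hsum
  obtain ⟨U, hU, hUlt⟩ := Finset.exists_lt_of_sum_lt key
  rw [mem_powersetCard] at hU
  refine ⟨U, hU.1, hU.2, fun x hx => ?_⟩
  by_contra hcon
  push_neg at hcon
  have h1 : a.choose k ≤ (U ∩ E x).card.choose k := Nat.choose_le_choose k hcon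
  have h2 : (U ∩ E x).card.choose k ≤ ∑ y ∈ I, ((U ∩ E y).card.choose k) :=
    Finset.single_le_sum (f := fun y => ((U ∩ E y).card.choose k)) (fun y _ => Nat.zero_le _) hx
  omega

lemma pow_cubic (t : ℝ) (ht : 0 ≤ t) (k : ℕ) (hk : 3 ≤ k) :
    ((k:ℝ) - 2)^3 * t^3 / 6 ≤ (1+t)^k := by
  have hbin : ((k.choose 3 : ℕ) : ℝ) * t^3 ≤ (1+t)^k := by
    have hexp := add_pow (R := ℝ) t 1 k
    have hmem : 3 ∈ range (k+1) := by
      rw [mem_range]; omega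
    have hterm := Finset.single_le_sum
      (f := fun m => t ^ m * 1 ^ (k - m) * (k.choose m : ℝ))
      (fun m _ => by positivity) hmem
    rw [← hexp] at hterm
    calc ((k.choose 3 : ℕ) : ℝ) * t^3 = t ^ 3 * 1 ^ (k - 3) * (k.choose 3 : ℝ) := by ring
      _ ≤ (t+1)^k := hterm
      _ = (1+t)^k := by ring
  have hchoose : ((k:ℝ) - 2)^3 / 6 ≤ ((k.choose 3 : ℕ) : ℝ) := by
    have hid := cast_choose_mul_factorial (n := k) hk
    have h6 : ((3:ℕ).factorial : ℝ) = 6 := by norm_num [Nat.factorial]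
    rw [h6] at hid
    have hprod : ∏ i ∈ range 3, ((k:ℝ) - i) = (k:ℝ) * ((k:ℝ)-1) * ((k:ℝ)-2) := by
      rw [Finset.prod_range_succ, Finset.prod_range_succ, Finset.prod_range_succ,
        Finset.prod_range_zero]
      norm_num
    rw [hprod] at hid
    have hk2 : (0:ℝ) ≤ (k:ℝ) - 2 := by
      have : (3:ℝ) ≤ k := by exact_mod_cast hk
      linarith
    have hcube : ((k:ℝ) - 2)^3 ≤ (k:ℝ) * ((k:ℝ)-1) * ((k:ℝ)-2) := by nlinarith
    nlinarith [hid, hcube]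
  have ht3 : (0:ℝ) ≤ t^3 := by positivity
  calc ((k:ℝ) - 2)^3 * t^3 / 6 = (((k:ℝ) - 2)^3 / 6) * t^3 := by ring
    _ ≤ ((k.choose 3 : ℕ) : ℝ) * t^3 := mul_le_mul_of_nonneg_right hchoose ht3
    _ ≤ (1+t)^k := hbin
lemma vortex_step {n : ℕ} (G : SimpleGraph (Fin n)) [DecidableRel G.Adj] {ε : ℝ}
    (hε0 : 0 < ε) (hε1 : ε < 1)
    (W : Finset (Fin n)) (δc : ℝ) (hδc1 : δc ≤ 1)
    (hs16 : 16 ≤ ⌊ε * (W.card:ℝ)⌋₊)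
    (hsbig : (49152/ε)^2 ≤ ((⌊ε * (W.card:ℝ)⌋₊ : ℕ) : ℝ))
    (hmin : ∀ x ∈ W, δc * (W.card:ℝ) ≤ ((W ∩ G.neighborFinset x).card : ℝ)) :
    ∃ U ⊆ W, U.card = ⌊ε * (W.card:ℝ)⌋₊ ∧
      ∀ x ∈ W, (δc - 1/Real.sqrt (Real.sqrt ((⌊ε * (W.card:ℝ)⌋₊ : ℕ) : ℝ)))
          * ((⌊ε * (W.card:ℝ)⌋₊ : ℕ) : ℝ) ≤ ((U ∩ G.neighborFinset x).card : ℝ) := by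
  set N : ℕ := W.card with hNdef
  set s : ℕ := ⌊ε * (N:ℝ)⌋₊ with hsdef
  set u : ℝ := Real.sqrt (Real.sqrt (s:ℝ)) with hudef
  set γ : ℝ := 1/u with hγdef
  have hsR : (16:ℝ) ≤ (s:ℝ) := by exact_mod_cast hs16
  have hs0 : 0 < s := by omega
  have hu2 : (2:ℝ) ≤ u := by
    have h16 : Real.sqrt 16 = 4 := by
      rw [show (16:ℝ) = 4^2 by norm_num, Real.sqrt_sq (by norm_num : (0:ℝ) ≤ 4)]
    have h4 : Real.sqrt 4 = 2 := by
      rw [show (4:ℝ) = 2^2 by norm_num, Real.sqrt_sq (by norm_num : (0:ℝ) ≤ 2)]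
    calc (2:ℝ) = Real.sqrt (Real.sqrt 16) := by rw [h16, h4]
      _ ≤ u := by
          rw [hudef]
          exact Real.sqrt_le_sqrt (Real.sqrt_le_sqrt hsR)
  have hu0 : (0:ℝ) < u := by linarith
  have hγ0 : 0 < γ := by rw [hγdef]; positivity
  have hγhalf : γ ≤ 1/2 := by
    rw [hγdef, div_le_div_iff₀ hu0 (by norm_num)]
    linarith
  have hu4 : u^4 = (s:ℝ) := by
    rw [hudef]
    have h1 : Real.sqrt (Real.sqrt (s:ℝ)) ^ 2 = Real.sqrt (s:ℝ) :=
      Real.sq_sqrt (Real.sqrt_nonneg _)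
    have h2 : Real.sqrt (s:ℝ) ^ 2 = (s:ℝ) := Real.sq_sqrt (by positivity)
    calc Real.sqrt (Real.sqrt (s:ℝ)) ^ 4 = (Real.sqrt (Real.sqrt (s:ℝ)) ^ 2)^2 := by ring
      _ = (s:ℝ) := by rw [h1, h2]
  have hu2sq : u^2 = Real.sqrt (s:ℝ) := by
    rw [hudef]; exact Real.sq_sqrt (Real.sqrt_nonneg _)
  have hsleN : (s:ℝ) ≤ ε * N := Nat.floor_le (by positivity)
  have hNR : (0:ℝ) < (N:ℝ) := by nlinarith
  have hN0 : 0 < N := by exact_mod_cast hNR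
  have hsltN : s < N := by
    have : (s:ℝ) < (N:ℝ) := by nlinarith
    exact_mod_cast this
  have hsγ : (s:ℝ) * γ = u^3 := by
    rw [hγdef]
    field_simp
    rw [← hu4]
  rcases le_or_gt δc γ with hcase | hcase
  · obtain ⟨U, hUW, hUcard⟩ := Finset.exists_subset_card_eq (le_of_lt hsltN)
    refine ⟨U, hUW, hUcard, fun x hx => ?_⟩
    have hle0 : (δc - γ) * (s:ℝ) ≤ 0 :=
      mul_nonpos_of_nonpos_of_nonneg (by linarith) (by positivity)
    calc (δc - γ) * (s:ℝ) ≤ 0 := hle0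
      _ ≤ ((U ∩ G.neighborFinset x).card : ℝ) := by positivity
  · have hδc0 : 0 < δc := lt_trans hγ0 hcase
    set d₀ : ℕ := ⌈(δc - γ) * (s:ℝ)⌉₊ with hd₀def
    set a : ℕ := s - d₀ + 1 with hadef
    set e : ℕ := ⌊(1-δc) * (N:ℝ)⌋₊ with hedef
    set k : ℕ := ⌈(s:ℝ)/(2*u)⌉₊ with hkdef
    have hδγs : (0:ℝ) < (δc - γ) * s := by
      apply mul_pos (by linarith) (by exact_mod_cast hs0)
    have hd₀pos : 1 ≤ d₀ := Nat.one_le_iff_ne_zero.mpr (Nat.ceil_pos.mpr hδγs).ne'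
    have hd₀s : d₀ ≤ s := by
      rw [hd₀def]
      apply Nat.ceil_le.mpr
      nlinarith
    have haR : ((1:ℝ) - δc + γ) * s ≤ (a:ℝ) := by
      have hcast : (a:ℝ) = (s:ℝ) - (d₀:ℝ) + 1 := by
        rw [hadef]
        push_cast [Nat.cast_sub hd₀s]
        ring
      have hceil : (d₀:ℝ) < (δc - γ) * s + 1 := Nat.ceil_lt_add_one (le_of_lt hδγs)
      rw [hcast]
      nlinarith
    have has : a ≤ s := by omega
    have hu3div : (s:ℝ)/(2*u) = u^3/2 := by
      rw [← hu4]
      field_simp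
    have hu38 : (8:ℝ) ≤ u^3 := by nlinarith
    have hk4 : 4 ≤ k := by
      have h1 : (4:ℝ) ≤ (s:ℝ)/(2*u) := by rw [hu3div]; linarith
      have h2 : ((s:ℝ)/(2*u)) ≤ (k:ℝ) := Nat.le_ceil _
      have : (4:ℝ) ≤ (k:ℝ) := by linarith
      exact_mod_cast this
    have hkR : (k:ℝ) ≤ (3/4) * ((s:ℝ) * γ) := by
      have h1 : (k:ℝ) < (s:ℝ)/(2*u) + 1 := Nat.ceil_lt_add_one (by positivity)
      rw [hu3div] at h1
      rw [hsγ]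
      nlinarith
    have hks : k ≤ s := by
      have : (k:ℝ) ≤ (s:ℝ) := by
        rw [hsγ] at hkR
        nlinarith
      exact_mod_cast this
    have hka : k ≤ a := by
      have : (k:ℝ) ≤ (a:ℝ) := by
        have h1 : (3/4) * ((s:ℝ) * γ) ≤ ((1:ℝ) - δc + γ) * s := by nlinarith
        linarith [haR, hkR]
      exact_mod_cast this
    have heN : e ≤ N := by
      rw [hedef]
      calc ⌊(1-δc) * (N:ℝ)⌋₊ ≤ ⌊(N:ℝ)⌋₊ := Nat.floor_le_floor (by nlinarith)
        _ = N := Nat.floor_natCast N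
    have heR : (e:ℝ) ≤ (1-δc) * N := Nat.floor_le (by nlinarith)
    have hE : ∀ x ∈ W, (W \ G.neighborFinset x).card ≤ e := by
      intro x hx
      apply Nat.le_floor
      have hpart := Finset.card_inter_add_card_sdiff W (G.neighborFinset x)
      have hmx := hmin x hx
      have hle : (W ∩ G.neighborFinset x).card ≤ N := by
        rw [hNdef]; exact card_le_card inter_subset_left
      have h' : (W \ G.neighborFinset x).card = N - (W ∩ G.neighborFinset x).card := by omega
      rw [h']
      push_cast [Nat.cast_sub hle]
      linarith
    -- power bound
    have hpow : (N:ℝ) < (1+γ/4)^k := by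
      have hNlt : (N:ℝ) < ((s:ℝ)+1)/ε := by
        rw [lt_div_iff₀ hε0]
        have h := Nat.lt_floor_add_one (ε * (N:ℝ))
        rw [← hsdef] at h
        nlinarith
      have hsqrts : (49152/ε) ≤ u^2 := by
        rw [hu2sq, show (49152/ε) = Real.sqrt ((49152/ε)^2) from
          (Real.sqrt_sq (by positivity)).symm]
        exact Real.sqrt_le_sqrt hsbig
      have step1 : ((s:ℝ)+1)/ε ≤ 2*(s:ℝ)/ε := by gcongr; linarith
      have step2 : 2*(s:ℝ)/ε ≤ u^6/24576 := by
        have h6 : u^6 = (s:ℝ)*u^2 := by rw [← hu4]; ring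
        have hmul : (s:ℝ)*(49152/ε) ≤ (s:ℝ)*u^2 :=
          mul_le_mul_of_nonneg_left hsqrts (by positivity)
        have heq : (s:ℝ)*(49152/ε)/24576 = 2*(s:ℝ)/ε := by
          field_simp
          ring
        rw [h6, ← heq]
        gcongr
      have hkc : u^3/2 ≤ (k:ℝ) := by
        rw [← hu3div]; exact Nat.le_ceil _
      have hk2 : u^3/4 ≤ (k:ℝ) - 2 := by
        have h4k : (4:ℝ) ≤ (k:ℝ) := by exact_mod_cast hk4
        nlinarith
      have hγ4 : γ/4 = 1/(4*u) := by rw [hγdef]; ring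
      have step3 : u^6/24576 ≤ ((k:ℝ)-2)^3*(γ/4)^3/6 := by
        have hcb : (u^3/4)^3 ≤ ((k:ℝ)-2)^3 := by
          apply pow_le_pow_left₀ (by positivity) hk2
        have hγ3 : (γ/4)^3 = 1/(64*u^3) := by
          rw [hγ4]
          field_simp
          ring
        have hmono : (u^3/4)^3*(γ/4)^3 ≤ ((k:ℝ)-2)^3*(γ/4)^3 :=
          mul_le_mul_of_nonneg_right hcb (by positivity)
        have hval : (u^3/4)^3*(γ/4)^3 = u^6/4096 := by
          rw [hγ3]
          field_simp
          ring
        nlinarith [hmono]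
      have step4 := pow_cubic (γ/4) (by positivity) k (by omega)
      linarith
    -- numeric hypothesis h1
    have h1 : (e:ℝ) * s * (1+γ/4) ≤ (N:ℝ) * ((a:ℝ) - k + 1) := by
      have c1 : (e:ℝ)*s*(1+γ/4) ≤ ((1-δc)*N)*s*(1+γ/4) := by
        apply mul_le_mul_of_nonneg_right _ (by linarith)
        apply mul_le_mul_of_nonneg_right heR (by positivity)
      have c2 : ((1-δc)*N)*s*(1+γ/4) ≤ (N:ℝ)*((1-δc)*s + γ*s/4) := by
        nlinarith [mul_nonneg (mul_nonneg (mul_nonneg hNR.le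
          (Nat.cast_nonneg (α := ℝ) s)) hγ0.le) hδc0.le]
      have c3 : (1-δc)*(s:ℝ) + γ*s/4 ≤ (a:ℝ) - k + 1 := by
        nlinarith [haR, hkR]
      have c4 : (N:ℝ)*((1-δc)*s + γ*s/4) ≤ (N:ℝ)*((a:ℝ)-k+1) :=
        mul_le_mul_of_nonneg_left c3 hNR.le
      linarith
    -- apply numeric + selection
    have hnum := numericR N s k a e γ (le_of_lt hγ0) hN0 hks (le_of_lt hsltN) hka has heN h1 hpow
    have hsumN : ∑ x ∈ W, ((W \ G.neighborFinset x).card.choose k * ((N - k).choose (s - k)))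
        ≤ N * (e.choose k * ((N-k).choose (s-k))) := by
      have := Finset.sum_le_card_nsmul W
        (fun x => (W \ G.neighborFinset x).card.choose k * ((N - k).choose (s - k)))
        (e.choose k * ((N-k).choose (s-k)))
        (fun x hx => Nat.mul_le_mul_right _ (Nat.choose_le_choose k (hE x hx)))
      rwa [smul_eq_mul, ← hNdef] at this
    have hsum : ∑ x ∈ W, ((W \ G.neighborFinset x).card.choose k * ((W.card - k).choose (s - k)))
        < W.card.choose s * a.choose k := by
      rw [← hNdef]
      have hcastlt : ((N * (e.choose k * ((N-k).choose (s-k))) : ℕ) : ℝ)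
          < ((N.choose s * a.choose k : ℕ) : ℝ) := by
        push_cast
        nlinarith [hnum]
      have hlt : N * (e.choose k * ((N-k).choose (s-k))) < N.choose s * a.choose k := by
        exact_mod_cast hcastlt
      omega
    obtain ⟨U, hUW, hUcard, hUE⟩ := selection W W (fun x => W \ G.neighborFinset x) s k a
      (fun x _ => sdiff_subset) (le_of_lt hsltN) hks hka hsum
    refine ⟨U, hUW, hUcard, fun x hx => ?_⟩
    have hUE' : (U ∩ (W \ G.neighborFinset x)).card < a := hUE x hx
    have heq : U ∩ (W \ G.neighborFinset x) = U \ G.neighborFinset x := by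
      ext y
      simp only [mem_inter, mem_sdiff]
      constructor
      · rintro ⟨h1', h2'⟩; exact ⟨h1', h2'.2⟩
      · rintro ⟨h1', h2'⟩; exact ⟨h1', hUW h1', h2'⟩
    rw [heq] at hUE'
    have hpartU := Finset.card_inter_add_card_sdiff U (G.neighborFinset x)
    have hd : d₀ ≤ (U ∩ G.neighborFinset x).card := by omega
    have hdR : ((δc - γ) * (s:ℝ)) ≤ (d₀:ℝ) := Nat.le_ceil _
    have : (d₀:ℝ) ≤ ((U ∩ G.neighborFinset x).card : ℝ) := by exact_mod_cast hd
    linarith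
noncomputable def Phi (ε : ℝ) (N : ℕ) : ℝ :=
  ε - (1/(1-Real.sqrt (Real.sqrt ε))) / Real.sqrt (Real.sqrt (N:ℝ))

lemma sqrt_sqrt_eps_lt_one {ε : ℝ} (hε0 : 0 < ε) (hε1 : ε < 1) :
    Real.sqrt (Real.sqrt ε) < 1 := by
  have h1 : Real.sqrt ε < 1 := by
    rw [show (1:ℝ) = Real.sqrt 1 from (Real.sqrt_one).symm]
    exact Real.sqrt_lt_sqrt (le_of_lt hε0) hε1
  rw [show (1:ℝ) = Real.sqrt 1 from (Real.sqrt_one).symm]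
  exact Real.sqrt_lt_sqrt (Real.sqrt_nonneg _) h1

lemma Phi_le {ε : ℝ} (hε0 : 0 < ε) (hε1 : ε < 1) (N : ℕ) : Phi ε N ≤ ε := by
  have hE := sqrt_sqrt_eps_lt_one hε0 hε1
  have h1E : (0:ℝ) ≤ 1 - Real.sqrt (Real.sqrt ε) := by linarith
  have : (0:ℝ) ≤ (1/(1-Real.sqrt (Real.sqrt ε))) / Real.sqrt (Real.sqrt (N:ℝ)) := by
    apply div_nonneg (div_nonneg zero_le_one h1E) (Real.sqrt_nonneg _)
  unfold Phi
  linarith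

lemma Phi_rec {ε : ℝ} (hε0 : 0 < ε) (hε1 : ε < 1) (s N : ℕ) (hs1 : 1 ≤ s)
    (hsleN : (s:ℝ) ≤ ε*N) :
    1/Real.sqrt (Real.sqrt (s:ℝ)) ≤ Phi ε N - Phi ε s := by
  set E : ℝ := Real.sqrt (Real.sqrt ε) with hEdef
  set A : ℝ := Real.sqrt (Real.sqrt (s:ℝ)) with hAdef
  set B : ℝ := Real.sqrt (Real.sqrt (N:ℝ)) with hBdef
  have hElt := sqrt_sqrt_eps_lt_one hε0 hε1
  have hE0 : 0 < E := by rw [hEdef]; positivity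
  have hs0R : (0:ℝ) < (s:ℝ) := by exact_mod_cast hs1
  have hA0 : 0 < A := by rw [hAdef]; positivity
  have hN0R : (0:ℝ) < (N:ℝ) := by nlinarith
  have hB0 : 0 < B := by rw [hBdef]; positivity
  have hmul : Real.sqrt (Real.sqrt (ε*(N:ℝ))) = E * B := by
    rw [hEdef, hBdef, Real.sqrt_mul (le_of_lt hε0), Real.sqrt_mul (Real.sqrt_nonneg _)]
  have hAEB : A ≤ E * B := by
    rw [← hmul, hAdef]
    exact Real.sqrt_le_sqrt (Real.sqrt_le_sqrt hsleN)
  have key : 1/B ≤ E/A := by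
    rw [div_le_div_iff₀ hB0 hA0]
    linarith
  set C : ℝ := 1/(1-E) with hCdef
  have hC0 : 0 < C := by
    rw [hCdef]
    apply div_pos one_pos (by linarith)
  have hPhiN : Phi ε N = ε - C/B := rfl
  have hPhis : Phi ε s = ε - C/A := rfl
  have h1 : C/B = C*(1/B) := by ring
  have h2 : C*(1/B) ≤ C*(E/A) := mul_le_mul_of_nonneg_left key (le_of_lt hC0)
  have h3 : C*(1/A) - C*(E/A) = 1/A := by
    rw [hCdef]
    have : (1-E) ≠ 0 := by linarith
    field_simp
  have h4 : C/A = C*(1/A) := by ring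
  rw [hPhiN, hPhis]
  have : Phi ε N - Phi ε s = C/A - C/B := by rw [hPhiN, hPhis]; ring
  calc 1/A = C*(1/A) - C*(E/A) := h3.symm
    _ ≤ C*(1/A) - C*(1/B) := by linarith
    _ = (ε - C/B) - (ε - C/A) := by rw [h1, h4]; ring
lemma vortex_aux {n : ℕ} (G : SimpleGraph (Fin n)) [DecidableRel G.Adj] {δ ε : ℝ}
    (hδ1 : δ ≤ 1) (hε0 : 0 < ε) (hε1 : ε < 1) (m' : ℕ)
    (hgood : ∀ s : ℕ, ⌊ε * (m':ℝ)⌋₊ ≤ s →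
      16 ≤ s ∧ (49152/ε)^2 ≤ (s:ℝ) ∧ 0 ≤ Phi ε s) :
    ∀ N (W : Finset (Fin n)), W.card = N → m' ≤ N →
      (∀ x ∈ W, (δ - ε + Phi ε N) * N ≤ ((W ∩ G.neighborFinset x).card : ℝ)) →
      ∃ (ℓ : ℕ) (U : ℕ → Finset (Fin n)), U 0 = W ∧
        (∀ i, 1 ≤ i → i ≤ ℓ → U i ⊆ U (i-1)) ∧
        (∀ i, 1 ≤ i → i ≤ ℓ → (U i).card = ⌊ε * ((U (i-1)).card : ℝ)⌋₊) ∧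
        ⌊ε * (m':ℝ)⌋₊ ≤ (U ℓ).card ∧ (U ℓ).card ≤ m' ∧
        (∀ i, 1 ≤ i → i ≤ ℓ → ∀ x ∈ U (i-1),
          (δ - ε) * ((U i).card : ℝ) ≤ (((U i) ∩ G.neighborFinset x).card : ℝ)) := by
  intro N
  induction N using Nat.strong_induction_on with
  | _ N IH =>
    intro W hWcard hm'N hmin
    by_cases hNm : N ≤ m'
    · have hNm' : N = m' := le_antisymm hNm hm'N
      refine ⟨0, fun _ => W, rfl, ?_, ?_, ?_, ?_, ?_⟩
      · intro i hi1 hi0; omega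
      · intro i hi1 hi0; omega
      · show ⌊ε * (m':ℝ)⌋₊ ≤ W.card
        rw [hWcard, hNm']
        calc ⌊ε * (m':ℝ)⌋₊ ≤ ⌊(m':ℝ)⌋₊ :=
            Nat.floor_le_floor (by nlinarith [Nat.cast_nonneg (α := ℝ) m'])
          _ = m' := Nat.floor_natCast m'
      · show W.card ≤ m'
        omega
      · intro i hi1 hi0; omega
    · push_neg at hNm
      set s : ℕ := ⌊ε * (N:ℝ)⌋₊ with hsdef
      have hsm' : ⌊ε * (m':ℝ)⌋₊ ≤ s := by
        apply Nat.floor_le_floor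
        have : (m':ℝ) ≤ (N:ℝ) := by exact_mod_cast hm'N
        nlinarith
      obtain ⟨h16, hbig, hphis⟩ := hgood s hsm'
      have hδc1 : δ - ε + Phi ε N ≤ 1 := by
        have := Phi_le hε0 hε1 N
        linarith
      have hfloorW : ⌊ε * (W.card:ℝ)⌋₊ = s := by rw [hWcard]
      obtain ⟨U₁, hU₁W, hU₁card, hU₁deg⟩ := vortex_step G hε0 hε1 W (δ - ε + Phi ε N) hδc1
        (by rw [hfloorW]; exact h16)
        (by rw [hfloorW]; exact hbig)
        (by rw [hWcard]; exact hmin)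
      rw [hfloorW] at hU₁card hU₁deg
      have hs1 : 1 ≤ s := by omega
      have hsleN : (s:ℝ) ≤ ε * N := by
        rw [hsdef]; exact Nat.floor_le (by positivity)
      have hrec := Phi_rec hε0 hε1 s N hs1 hsleN
      have hsnn : (0:ℝ) ≤ (s:ℝ) := Nat.cast_nonneg s
      have key : ∀ x ∈ W, (δ - ε + Phi ε s) * s ≤ ((U₁ ∩ G.neighborFinset x).card : ℝ) := by
        intro x hx
        have h1 := hU₁deg x hx
        have h2 : (δ - ε + Phi ε s) * (s:ℝ)
            ≤ ((δ - ε + Phi ε N) - 1/Real.sqrt (Real.sqrt (s:ℝ))) * (s:ℝ) := by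
          apply mul_le_mul_of_nonneg_right _ hsnn
          linarith
        linarith
      have keydeg : ∀ x ∈ W, (δ - ε) * (s:ℝ) ≤ ((U₁ ∩ G.neighborFinset x).card : ℝ) := by
        intro x hx
        have h1 := key x hx
        have h2 : (δ - ε) * (s:ℝ) ≤ (δ - ε + Phi ε s) * (s:ℝ) := by
          apply mul_le_mul_of_nonneg_right _ hsnn
          linarith
        linarith
      by_cases hsm : s ≤ m'
      · -- one step and stop
        refine ⟨1, fun i => if i = 0 then W else U₁, rfl, ?_, ?_, ?_, ?_, ?_⟩
        · intro i hi1 hiℓ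
          have : i = 1 := by omega
          subst this
          simpa using hU₁W
        · intro i hi1 hiℓ
          have : i = 1 := by omega
          subst this
          show U₁.card = ⌊ε * ((W.card:ℝ))⌋₊
          rw [hfloorW]; exact hU₁card
        · show ⌊ε * (m':ℝ)⌋₊ ≤ U₁.card
          rw [hU₁card]; exact hsm'
        · show U₁.card ≤ m'
          rw [hU₁card]; exact hsm
        · intro i hi1 hiℓ
          have : i = 1 := by omega
          subst this
          intro x hx
          simp only [show (1:ℕ) - 1 = 0 from rfl, if_pos, if_neg one_ne_zero] at hx ⊢
          rw [hU₁card]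
          exact keydeg x hx
      · -- recurse
        push_neg at hsm
        have hsltN : s < N := by
          have hNR : (0:ℝ) < (N:ℝ) := by
            have : (0:ℝ) ≤ (m':ℝ) := Nat.cast_nonneg m'
            have : (m':ℝ) < (N:ℝ) := by exact_mod_cast hNm
            linarith
          have : (s:ℝ) < (N:ℝ) := by nlinarith
          exact_mod_cast this
        obtain ⟨ℓ', U', hU'0, hsub', hcard', hlo', hhi', hdeg'⟩ :=
          IH s hsltN U₁ hU₁card (le_of_lt hsm) (fun x hx => key x (hU₁W hx))
        refine ⟨ℓ'+1, fun i => if i = 0 then W else U' (i-1), rfl, ?_, ?_, ?_, ?_, ?_⟩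
        · intro i hi1 hiℓ
          by_cases hi : i = 1
          · subst hi
            simpa [hU'0] using hU₁W
          · have h2i : 2 ≤ i := by omega
            have e1 : (if i = 0 then W else U' (i-1)) = U' (i-1) := by
              rw [if_neg (by omega)]
            have e2 : (if i - 1 = 0 then W else U' (i-1-1)) = U' (i-1-1) := by
              rw [if_neg (by omega)]
            show (if i = 0 then W else U' (i-1)) ⊆ (if i - 1 = 0 then W else U' (i-1-1))
            rw [e1, e2]
            exact hsub' (i-1) (by omega) (by omega)
        · intro i hi1 hiℓ
          by_cases hi : i = 1
          · subst hi
            show (U' 0).card = ⌊ε * ((W.card:ℝ))⌋₊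
            rw [hU'0, hU₁card, hfloorW]
          · have h2i : 2 ≤ i := by omega
            have e1 : (if i = 0 then W else U' (i-1)) = U' (i-1) := by
              rw [if_neg (by omega)]
            have e2 : (if i - 1 = 0 then W else U' (i-1-1)) = U' (i-1-1) := by
              rw [if_neg (by omega)]
            show (if i = 0 then W else U' (i-1)).card
              = ⌊ε * (((if i - 1 = 0 then W else U' (i-1-1)).card : ℕ) : ℝ)⌋₊
            rw [e1, e2]
            exact hcard' (i-1) (by omega) (by omega)
        · show ⌊ε * (m':ℝ)⌋₊ ≤ (if ℓ'+1 = 0 then W else U' (ℓ'+1-1)).card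
          rw [if_neg (by omega)]
          simpa using hlo'
        · show (if ℓ'+1 = 0 then W else U' (ℓ'+1-1)).card ≤ m'
          rw [if_neg (by omega)]
          simpa using hhi'
        · intro i hi1 hiℓ
          by_cases hi : i = 1
          · subst hi
            intro x hx
            simp only [show (1:ℕ) - 1 = 0 from rfl, if_pos] at hx
            show (δ - ε) * (((if (1:ℕ) = 0 then W else U' 0).card : ℕ) : ℝ)
              ≤ (((if (1:ℕ) = 0 then W else U' 0) ∩ G.neighborFinset x).card : ℝ)
            rw [if_neg one_ne_zero, hU'0, hU₁card]
            exact keydeg x hx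
          · have h2i : 2 ≤ i := by omega
            intro x hx
            have e1 : (if i = 0 then W else U' (i-1)) = U' (i-1) := by
              rw [if_neg (by omega)]
            have e2 : (if i - 1 = 0 then W else U' (i-1-1)) = U' (i-1-1) := by
              rw [if_neg (by omega)]
            have hx' : x ∈ (if i - 1 = 0 then W else U' (i-1-1)) := hx
            rw [e2] at hx'
            show (δ - ε) * (((if i = 0 then W else U' (i-1)).card : ℕ) : ℝ)
              ≤ (((if i = 0 then W else U' (i-1)) ∩ G.neighborFinset x).card : ℝ)
            rw [e1]
            exact hdeg' (i-1) (by omega) (by omega) x hx'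

/-- `U 0 ⊇ U 1 ⊇ ⋯ ⊇ U ℓ` is a `(δ, ε, m)`-vortex in `G`:
(V1) `U 0 = V(G)`; (V2) `|U i| = ⌊ε |U (i−1)|⌋` for `i ∈ [ℓ]`; (V3) `|U ℓ| = m`;
(V4) `d_G(x, U i) ≥ δ |U i|` for all `i ∈ [ℓ]` and `x ∈ U (i−1)`. -/
def IsVortex {n : ℕ} (G : SimpleGraph (Fin n)) (δ ε : ℝ) (m : ℕ) (ℓ : ℕ)
    (U : ℕ → Finset (Fin n)) : Prop :=
  U 0 = Finset.univ ∧
  (∀ i, 1 ≤ i → i ≤ ℓ → U i ⊆ U (i - 1)) ∧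
  (∀ i, 1 ≤ i → i ≤ ℓ → (U i).card = ⌊ε * (U (i - 1)).card⌋₊) ∧
  (U ℓ).card = m ∧
  (∀ i, 1 ≤ i → i ≤ ℓ → ∀ x ∈ U (i - 1),
    δ * (U i).card ≤ ((G.neighborSet x ∩ ↑(U i)).ncard : ℝ))

/-- For `δ ∈ [0,1]` and `0 < ε < 1` there exists `m₀'` such that for all `m' ≥ m₀'`:
every graph `G` on `n ≥ m'` vertices with `δ(G) ≥ δn` has a `(δ − ε, ε, m)`-vortex
for some `⌊ε m'⌋ ≤ m ≤ m'`. -/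
theorem exists_vortex (δ ε : ℝ) (hδ : δ ∈ Set.Icc (0 : ℝ) 1)
    (hε0 : 0 < ε) (hε1 : ε < 1) :
    ∃ m₀' : ℕ, ∀ m' : ℕ, m₀' ≤ m' → ∀ n : ℕ, m' ≤ n →
      ∀ G : SimpleGraph (Fin n),
        (∀ v, δ * n ≤ ((G.neighborSet v).ncard : ℝ)) →
        ∃ (m ℓ : ℕ) (U : ℕ → Finset (Fin n)),
          ⌊ε * m'⌋₊ ≤ m ∧ m ≤ m' ∧ IsVortex G (δ - ε) ε m ℓ U := by
  classical
  obtain ⟨hδ0, hδ1⟩ := hδ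
  set E : ℝ := Real.sqrt (Real.sqrt ε) with hEdef
  have hElt : E < 1 := sqrt_sqrt_eps_lt_one hε0 hε1
  have hE0 : 0 < E := by rw [hEdef]; positivity
  set C : ℝ := 1/(1-E) with hCdef
  have hC0 : 0 < C := by rw [hCdef]; exact div_pos one_pos (by linarith)
  set R : ℝ := max (max (16:ℝ) ((49152/ε)^2)) ((C/ε)^4) with hRdef
  refine ⟨⌈(R+1)/ε⌉₊, ?_⟩
  intro m' hm' n hn G hdeg
  haveI : DecidableRel G.Adj := Classical.decRel _
  -- hgood
  have hm'R : R + 1 ≤ ε * (m':ℝ) := by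
    have h1 : ((R+1)/ε) ≤ (⌈(R+1)/ε⌉₊ : ℝ) := Nat.le_ceil _
    have h2 : ((⌈(R+1)/ε⌉₊ : ℕ) : ℝ) ≤ (m' : ℝ) := by exact_mod_cast hm'
    rw [div_le_iff₀ hε0] at h1
    nlinarith
  have hfloorR : R ≤ ((⌊ε * (m':ℝ)⌋₊ : ℕ) : ℝ) := by
    have := Nat.lt_floor_add_one (ε * (m':ℝ))
    linarith
  have hgood : ∀ s : ℕ, ⌊ε * (m':ℝ)⌋₊ ≤ s →
      16 ≤ s ∧ (49152/ε)^2 ≤ (s:ℝ) ∧ 0 ≤ Phi ε s := by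
    intro s hs
    have hsR : R ≤ (s:ℝ) := le_trans hfloorR (by exact_mod_cast hs)
    have h16R : (16:ℝ) ≤ R := le_trans (le_max_left _ _) (le_max_left _ _)
    have h49R : ((49152/ε)^2) ≤ R := le_trans (le_max_right _ _) (le_max_left _ _)
    have hCR : ((C/ε)^4) ≤ R := le_max_right _ _
    refine ⟨?_, by linarith, ?_⟩
    · have : (16:ℝ) ≤ (s:ℝ) := by linarith
      exact_mod_cast this
    · -- Phi ε s ≥ 0
      have hCe0 : 0 < C/ε := div_pos hC0 hε0
      have hs4 : (C/ε)^4 ≤ (s:ℝ) := by linarith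
      have hsnn : (0:ℝ) ≤ (s:ℝ) := Nat.cast_nonneg s
      have hss : C/ε ≤ Real.sqrt (Real.sqrt (s:ℝ)) := by
        have hrw : (C/ε) = Real.sqrt (Real.sqrt ((C/ε)^4)) := by
          rw [show ((C/ε)^4) = ((C/ε)^2)^2 by ring, Real.sqrt_sq (by positivity),
            Real.sqrt_sq (le_of_lt hCe0)]
        rw [hrw]
        exact Real.sqrt_le_sqrt (Real.sqrt_le_sqrt hs4)
      have hsqpos : 0 < Real.sqrt (Real.sqrt (s:ℝ)) := lt_of_lt_of_le hCe0 hss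
      have hdiv : C / Real.sqrt (Real.sqrt (s:ℝ)) ≤ C / (C/ε) :=
        div_le_div_of_nonneg_left (le_of_lt hC0) hCe0 hss
      have hCC : C / (C/ε) = ε := by
        field_simp
      unfold Phi
      rw [← hEdef, ← hCdef]
      linarith [hdiv, hCC ▸ hdiv]
  -- apply vortex_aux
  have hcardW : (Finset.univ : Finset (Fin n)).card = n := by
    rw [Finset.card_univ, Fintype.card_fin]
  have hminW : ∀ x ∈ (Finset.univ : Finset (Fin n)),
      (δ - ε + Phi ε n) * n ≤ (((Finset.univ : Finset (Fin n)) ∩ G.neighborFinset x).card : ℝ) := by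
    intro x _
    rw [Finset.univ_inter]
    have h1 : (G.neighborSet x).ncard = (G.neighborFinset x).card := by
      rw [SimpleGraph.neighborFinset_def]
      exact Set.ncard_eq_toFinset_card' _
    have h2 := hdeg x
    rw [h1] at h2
    have h3 : (δ - ε + Phi ε n) * n ≤ δ * n := by
      have := Phi_le hε0 hε1 n
      apply mul_le_mul_of_nonneg_right _ (Nat.cast_nonneg n)
      linarith
    linarith
  obtain ⟨ℓ, U, hU0, hsub, hcard, hlo, hhi, hdegU⟩ :=
    vortex_aux G hδ1 hε0 hε1 m' hgood n Finset.univ hcardW hn hminW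
  refine ⟨(U ℓ).card, ℓ, U, hlo, hhi, hU0, hsub, hcard, rfl, ?_⟩
  intro i hi1 hiℓ x hx
  have heq : G.neighborSet x ∩ ↑(U i) = ↑((U i) ∩ G.neighborFinset x) := by
    ext y
    simp only [Set.mem_inter_iff, SimpleGraph.mem_neighborSet, Finset.coe_inter,
      Finset.mem_coe, Finset.mem_inter, SimpleGraph.mem_neighborFinset]
    tauto
  rw [heq, Set.ncard_coe_finset]
  exact hdegU i hi1 hiℓ x hx
end

section
/- Let X₁, …, X_n be Bernoulli (i.e. {0,1}-valued) random variables such that for all i ∈ [n], ℙ[X_i = 1 | X₁, …, X_{i−1}] ≤ p almost surely. Let B ∼ Bin(n, p) and X := Σ_{i=1}^n X_i. Then ℙ[X ≥ a] ≤ ℙ[B ≥ a] for all a ≥ 0. -/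
/-!
Reveal the variables one at a time. Writing `S` for the sum of the first `t` of them and `Y` for
the next one, `{a ≤ S + Y}` is contained in `{a ≤ S}` together with the `Y = 1` part of the strip
`{a - 1 ≤ S < a}`. The strip is measurable for the past, so conditioning bounds the mass of that
part by `p` times the mass of the strip, and
`ℙ[a ≤ S + Y] ≤ (1 - p) ℙ[a ≤ S] + p ℙ[a - 1 ≤ S]`.
The binomial tail satisfies this recursion with equality, since `Bin(t + 1, p)` is `Bin(t, p)` plus
an independent Bernoulli(`p`) variable, so induction on `t` gives the bound for every
real threshold `a`.
-/

open MeasureTheory ProbabilityTheory Finset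

noncomputable section

def binomialWeight (n : ℕ) (p : ℝ) (k : ℕ) : ℝ :=
  n.choose k * p ^ k * (1 - p) ^ (n - k)

def binomialTail (n : ℕ) (p a : ℝ) : ℝ :=
  ∑ k ∈ (range (n + 1)).filter (fun k : ℕ => a ≤ (k : ℝ)), binomialWeight n p k

end

lemma binomialWeight_eq_zero_of_lt {n k : ℕ} (p : ℝ) (h : n < k) : binomialWeight n p k = 0 := by
  simp [binomialWeight, Nat.choose_eq_zero_of_lt h]

lemma binomialWeight_succ_succ (n k : ℕ) (p : ℝ) :
    binomialWeight (n + 1) p (k + 1) =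
      (1 - p) * binomialWeight n p (k + 1) + p * binomialWeight n p k := by
  rcases lt_or_ge n (k + 1) with h | h
  · rw [binomialWeight_eq_zero_of_lt p h]
    simp [binomialWeight, Nat.choose_succ_succ', Nat.choose_eq_zero_of_lt h]
    ring
  · obtain ⟨d, rfl⟩ := Nat.exists_eq_add_of_le h
    simp only [binomialWeight, Nat.choose_succ_succ', Nat.cast_add]
    rw [show k + 1 + d + 1 - (k + 1) = d + 1 by omega, show k + 1 + d - (k + 1) = d by omega,
      show k + 1 + d - k = d + 1 by omega]
    ring

lemma sum_binomialWeight_succ_mul (n : ℕ) (p : ℝ) (g : ℕ → ℝ) :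
    ∑ k ∈ range (n + 2), binomialWeight (n + 1) p k * g k =
      (1 - p) * ∑ k ∈ range (n + 1), binomialWeight n p k * g k +
        p * ∑ k ∈ range (n + 1), binomialWeight n p k * g (k + 1) := by
  have hshift : ∑ k ∈ range (n + 1), binomialWeight n p k * g k =
      ∑ k ∈ range (n + 1), binomialWeight n p (k + 1) * g (k + 1) + binomialWeight n p 0 * g 0 := by
    rw [← sum_range_succ' (fun k => binomialWeight n p k * g k), sum_range_succ _ (n + 1),
      binomialWeight_eq_zero_of_lt p (Nat.lt_succ_self n), zero_mul, add_zero]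
  have hpascal : ∑ k ∈ range (n + 1), binomialWeight (n + 1) p (k + 1) * g (k + 1) =
      (1 - p) * ∑ k ∈ range (n + 1), binomialWeight n p (k + 1) * g (k + 1) +
        p * ∑ k ∈ range (n + 1), binomialWeight n p k * g (k + 1) := by
    simp only [binomialWeight_succ_succ, add_mul, sum_add_distrib, mul_sum, mul_assoc]
  rw [sum_range_succ', hpascal, hshift]
  simp only [binomialWeight, Nat.choose_zero_right, pow_zero, Nat.sub_zero]
  ring

lemma binomialTail_zero (p a : ℝ) : binomialTail 0 p a = if a ≤ 0 then 1 else 0 := by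
  simp [binomialTail, binomialWeight, sum_filter]

lemma binomialTail_succ (n : ℕ) (p a : ℝ) :
    binomialTail (n + 1) p a = (1 - p) * binomialTail n p a + p * binomialTail n p (a - 1) := by
  have h := sum_binomialWeight_succ_mul n p (fun k => if a ≤ k then 1 else 0)
  simp only [mul_boole, Nat.cast_add, Nat.cast_one, ← sub_le_iff_le_add] at h
  simpa only [binomialTail, sum_filter] using h

section

variable {Ω : Type*} {m m₀ : MeasurableSpace Ω} {μ : Measure Ω}

lemma setIntegral_le_of_condExp_le [IsFiniteMeasure μ] (hm : m ≤ m₀) {Y : Ω → ℝ}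
    (hY : Integrable Y μ) {p : ℝ} (hcond : ∀ᵐ ω ∂μ, μ[Y | m] ω ≤ p) {A : Set Ω}
    (hA : MeasurableSet[m] A) : ∫ ω in A, Y ω ∂μ ≤ p * μ.real A :=
  calc ∫ ω in A, Y ω ∂μ = ∫ ω in A, μ[Y | m] ω ∂μ := (setIntegral_condExp hm hY hA).symm
    _ ≤ ∫ _ in A, p ∂μ :=
      setIntegral_mono_ae integrable_condExp.integrableOn (integrable_const p).integrableOn hcond
    _ = p * μ.real A := by rw [setIntegral_const, smul_eq_mul, mul_comm]

lemma integrable_of_ae_eq_zero_or_one [IsFiniteMeasure μ] {Y : Ω → ℝ} (hY : Measurable Y)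
    (hbern : ∀ᵐ ω ∂μ, Y ω = 0 ∨ Y ω = 1) : Integrable Y μ := by
  refine (integrable_const (1 : ℝ)).mono' hY.aestronglyMeasurable ?_
  filter_upwards [hbern] with ω hω
  rcases hω with h | h <;> simp [h]

lemma measureReal_le_add_of_condExp_le [IsFiniteMeasure μ] (hm : m ≤ m₀) {S Y : Ω → ℝ}
    (hS : Measurable[m] S) (hY : Measurable Y) (hbern : ∀ᵐ ω ∂μ, Y ω = 0 ∨ Y ω = 1)
    {p : ℝ} (hcond : ∀ᵐ ω ∂μ, μ[Y | m] ω ≤ p) (a : ℝ) :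
    μ.real {ω | a ≤ S ω + Y ω} ≤
      (1 - p) * μ.real {ω | a ≤ S ω} + p * μ.real {ω | a - 1 ≤ S ω} := by
  set A := {ω | a - 1 ≤ S ω} \ {ω | a ≤ S ω}
  have hAm : MeasurableSet[m] A :=
    (measurableSet_le measurable_const hS).diff (measurableSet_le measurable_const hS)
  have hS₀ : Measurable S := hS.mono hm le_rfl
  have hle : ∀ᵐ ω ∂μ, {ω | a ≤ S ω + Y ω}.indicator 1 ω ≤
      {ω | a ≤ S ω}.indicator 1 ω + A.indicator Y ω := by
    filter_upwards [hbern] with ω hω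
    rcases hω with h | h <;>
      simp only [Set.indicator_apply, Set.mem_ofPred_eq, Set.mem_sdiff, A, h, Pi.one_apply] <;>
      split_ifs <;> grind
  have hB : MeasurableSet {ω | a ≤ S ω} := measurableSet_le measurable_const hS₀
  have hB' : MeasurableSet {ω | a ≤ S ω + Y ω} := measurableSet_le measurable_const (hS₀.add hY)
  have hYint := integrable_of_ae_eq_zero_or_one hY hbern
  have hstep : μ.real {ω | a ≤ S ω + Y ω} ≤ μ.real {ω | a ≤ S ω} + ∫ ω in A, Y ω ∂μ := by
    rw [← integral_indicator_one hB', ← integral_indicator_one hB,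
      ← integral_indicator (hm _ hAm)]
    have hB₁ : Integrable ({ω | a ≤ S ω}.indicator (1 : Ω → ℝ)) μ :=
      (integrable_const 1).indicator hB
    have hA₁ : Integrable (A.indicator Y) μ := hYint.indicator (hm _ hAm)
    exact (integral_mono_ae ((integrable_const (1 : ℝ)).indicator hB') (hB₁.add hA₁) hle).trans_eq
      (integral_add hB₁ hA₁)
  have hA : μ.real A = μ.real {ω | a - 1 ≤ S ω} - μ.real {ω | a ≤ S ω} :=
    measureReal_sdiff (fun ω (h : a ≤ S ω) => show a - 1 ≤ S ω by linarith) hB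
  have hYA := setIntegral_le_of_condExp_le hm hYint hcond hAm
  rw [hA] at hYA
  linarith

theorem measureReal_le_binomialTail_of_condExp_le [IsProbabilityMeasure μ] {p : ℝ} (hp0 : 0 ≤ p)
    (hp1 : p ≤ 1) {n : ℕ} (X : Fin n → Ω → ℝ) (ℱ : Fin n → MeasurableSpace Ω)
    (hℱ : ∀ i, ℱ i ≤ m₀) (hX : ∀ i, Measurable (X i))
    (hXℱ : ∀ i j, j < i → Measurable[ℱ i] (X j))
    (hbern : ∀ i, ∀ᵐ ω ∂μ, X i ω = 0 ∨ X i ω = 1)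
    (hcond : ∀ i, ∀ᵐ ω ∂μ, μ[X i | ℱ i] ω ≤ p) (a : ℝ) :
    μ.real {ω | a ≤ ∑ i, X i ω} ≤ binomialTail n p a := by
  induction n generalizing a with
  | zero =>
    rw [binomialTail_zero]
    split_ifs with ha
    · exact measureReal_le_one
    · simp [ha]
  | succ n ih =>
    have hS : Measurable[ℱ (Fin.last n)] fun ω => ∑ i : Fin n, X i.castSucc ω :=
      Finset.measurable_sum _ fun i _ => hXℱ _ _ i.castSucc_lt_last
    have ih' (b : ℝ) := ih (X ∘ Fin.castSucc) (ℱ ∘ Fin.castSucc) (fun i => hℱ _) (fun i => hX _)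
      (fun i j hij => hXℱ _ _ (Fin.castSucc_lt_castSucc_iff.mpr hij)) (fun i => hbern _)
      (fun i => hcond _) b
    simp only [Fin.sum_univ_castSucc, binomialTail_succ]
    calc _ ≤ _ := measureReal_le_add_of_condExp_le (hℱ _) hS (hX _) (hbern _) (hcond _) a
      _ ≤ _ := add_le_add (mul_le_mul_of_nonneg_left (ih' a) (by linarith))
        (mul_le_mul_of_nonneg_left (ih' (a - 1)) hp0)

end

/-- Let `X 0, …, X (n-1)` be `{0,1}`-valued random variables such that for each `i`
the conditional expectation of `X i` given the σ-algebra generated by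
`X 0, …, X (i-1)` is at most `p` almost surely. Let `B ∼ Bin(n, p)` and
`X := ∑ i, X i`. Then `ℙ[X ≥ a] ≤ ℙ[B ≥ a]` for all `a ≥ 0`, where
`ℙ[B ≥ a] = ∑_{k ≥ a} (n choose k) p^k (1-p)^{n-k}`. -/
theorem binomial_stochastic_domination {Ω : Type*} [MeasureSpace Ω]
    [IsProbabilityMeasure (ℙ : Measure Ω)]
    (n : ℕ) (p : ℝ) (hp0 : 0 ≤ p) (hp1 : p ≤ 1)
    (X : Fin n → Ω → ℝ)
    (hXmeas : ∀ i, Measurable (X i))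
    (hXbern : ∀ i, ∀ᵐ ω ∂ℙ, X i ω = 0 ∨ X i ω = 1)
    (hcond : ∀ i : Fin n, ∀ᵐ ω ∂ℙ,
      (ℙ[X i | ⨆ j : Fin n, ⨆ _ : j < i,
        MeasurableSpace.comap (X j) inferInstance]) ω ≤ p) :
    ∀ a : ℝ, 0 ≤ a →
      (ℙ {ω | a ≤ ∑ i, X i ω}).toReal ≤
        ∑ k ∈ (Finset.range (n + 1)).filter (fun k : ℕ => a ≤ (k : ℝ)),
          (n.choose k : ℝ) * p ^ k * (1 - p) ^ (n - k) := by
  intro a _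
  refine measureReal_le_binomialTail_of_condExp_le hp0 hp1 X _ (fun i => ?_) hXmeas
    (fun i j hji => ?_) hXbern hcond a
  · exact iSup₂_le fun j _ => (hXmeas j).comap_le
  · exact Measurable.of_comap_le (le_iSup₂ (f := fun j (_ : j < i) =>
      MeasurableSpace.comap (X j) inferInstance) j hji)
end

section
/- For every k ∈ ℕ the following holds. Let G₁ and G₂ be vertex-disjoint (6k+2)-regular graphs, each on 12k+6 vertices, let G₃ be the complete bipartite graph between V(G₁) and V(G₂), and let G := G₁ ∪ G₂ ∪ G₃, a graph on n = 24k+12 vertices. Then G is K₃-divisible, δ(G) = 3n/4 − 1, and G has no K₃-decomposition. -/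
/-- A graph `G` has a `K₃`-decomposition if its edge set can be partitioned into
triangles. -/
def HasK3Decomposition {V : Type*} (G : SimpleGraph V) : Prop :=
  ∃ T : Set (Finset V),
    (∀ t ∈ T, G.IsNClique 3 t) ∧
    ∀ e ∈ G.edgeSet, ∃! t, t ∈ T ∧ ∀ v ∈ e, v ∈ t

/-- A graph is `K₃`-divisible if `3` divides its number of edges and every vertex
has even degree. -/
def K3Divisible {V : Type*} (G : SimpleGraph V) : Prop :=
  3 ∣ G.edgeSet.ncard ∧ ∀ v, Even (G.neighborSet v).ncard

/-- The graph `G = G₁ ∪ G₂ ∪ G₃`, where `G₁` and `G₂` are placed on two disjoint vertex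
sets and `G₃` is the complete bipartite graph between them. -/
def extremalGraph (k : ℕ) (G₁ G₂ : SimpleGraph (Fin (12 * k + 6))) :
    SimpleGraph (Fin (12 * k + 6) ⊕ Fin (12 * k + 6)) :=
  SimpleGraph.fromRel (fun a b =>
    (∃ x y, a = Sum.inl x ∧ b = Sum.inl y ∧ G₁.Adj x y) ∨
    (∃ x y, a = Sum.inr x ∧ b = Sum.inr y ∧ G₂.Adj x y) ∨
    (∃ x y, a = Sum.inl x ∧ b = Sum.inr y))

/-!
Colour the two halves of `G` differently. A triangle has two vertices of the same colour, so it
contains at least one monochromatic edge and at most two bichromatic ones; hence in a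
`K₃`-decomposition the bichromatic edges number at most twice the monochromatic ones. In `G`
all `N² = (12k+6)²` edges between the halves are bichromatic, while `G` is `(18k+8)`-regular with
`N(18k+8)` edges, leaving only `N(6k+2)` monochromatic ones, and `N² > 2N(6k+2)`.
-/

open Finset SimpleGraph

theorem Set.ncard_eq_ncard_preimage_inl_add_ncard_preimage_inr {α β : Type*} [Finite α]
    [Finite β] (s : Set (α ⊕ β)) :
    s.ncard = (Sum.inl ⁻¹' s).ncard + (Sum.inr ⁻¹' s).ncard := by
  conv_lhs => rw [← Set.image_preimage_inl_union_image_preimage_inr s]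
  rw [Set.ncard_union_eq Set.disjoint_image_inl_image_inr,
    Set.ncard_image_of_injective _ Sum.inl_injective,
    Set.ncard_image_of_injective _ Sum.inr_injective]

namespace SimpleGraph

variable {V : Type*} {G : SimpleGraph V}

theorem two_mul_ncard_edgeSet_of_forall_ncard_neighborSet_eq [Fintype V] {d : ℕ}
    (h : ∀ v, (G.neighborSet v).ncard = d) :
    2 * G.edgeSet.ncard = Fintype.card V * d := by
  classical
  rw [← coe_edgeFinset, Set.ncard_coe_finset, ← sum_degrees_eq_twice_card_edges]
  have hdeg (v : V) : G.degree v = d := by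
    rw [← h, ← card_neighborSet_eq_degree, ← Nat.card_eq_fintype_card, Nat.card_coe_set_eq]
  simp [hdeg]

end SimpleGraph

section extremalGraph

variable {k : ℕ} {G₁ G₂ : SimpleGraph (Fin (12 * k + 6))} {x y : Fin (12 * k + 6)}

@[simp]
theorem extremalGraph_adj_inl_inl :
    (extremalGraph k G₁ G₂).Adj (.inl x) (.inl y) ↔ G₁.Adj x y := by
  simpa [extremalGraph, G₁.adj_comm y x] using fun h => h.ne

@[simp]
theorem extremalGraph_adj_inr_inr :
    (extremalGraph k G₁ G₂).Adj (.inr x) (.inr y) ↔ G₂.Adj x y := by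
  simpa [extremalGraph, G₂.adj_comm y x] using fun h => h.ne

@[simp]
theorem extremalGraph_adj_inl_inr : (extremalGraph k G₁ G₂).Adj (.inl x) (.inr y) := by
  simp [extremalGraph]

@[simp]
theorem extremalGraph_adj_inr_inl : (extremalGraph k G₁ G₂).Adj (.inr x) (.inl y) :=
  extremalGraph_adj_inl_inr.symm

theorem ncard_neighborSet_extremalGraph (hreg1 : ∀ v, (G₁.neighborSet v).ncard = 6 * k + 2)
    (hreg2 : ∀ v, (G₂.neighborSet v).ncard = 6 * k + 2)
    (v : Fin (12 * k + 6) ⊕ Fin (12 * k + 6)) :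
    ((extremalGraph k G₁ G₂).neighborSet v).ncard = 18 * k + 8 := by
  rw [Set.ncard_eq_ncard_preimage_inl_add_ncard_preimage_inr]
  cases v with
  | inl x =>
    rw [show Sum.inl ⁻¹' _ = G₁.neighborSet x by ext; simp,
      show Sum.inr ⁻¹' _ = Set.univ by ext; simp]
    simp [hreg1]
    ring
  | inr x =>
    rw [show Sum.inl ⁻¹' _ = Set.univ by ext; simp,
      show Sum.inr ⁻¹' _ = G₂.neighborSet x by ext; simp]
    simp [hreg2]
    ring

end extremalGraph

namespace Finset

variable {V : Type*} [DecidableEq V]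

theorem card_filter_sym2_not_isDiag_map_le_two {t : Finset V} (ht : #t = 3) (c : V → Bool) :
    #{e ∈ t.sym2 | ¬(e.map c).IsDiag} ≤ 2 := by
  set L := {v ∈ t | c v = true}
  set R := {v ∈ t | ¬c v = true}
  have hLR : #L + #R = 3 := ht ▸ card_filter_add_card_filter_not _
  have hsub : {e ∈ t.sym2 | ¬(e.map c).IsDiag} ⊆ (L ×ˢ R).image fun p => s(p.1, p.2) := by
    intro e he
    induction e using Sym2.ind with
    | h a b =>
      simp only [mem_filter, mk_mem_sym2_iff, Sym2.map_mk, Sym2.mk_isDiag_iff] at he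
      obtain ⟨⟨ha, hb⟩, hab⟩ := he
      simp only [mem_image, mem_product, Prod.exists, L, R, mem_filter]
      cases hca : c a
      · exact ⟨b, a, ⟨⟨hb, by simpa [hca] using hab⟩, ha, by simp [hca]⟩, Sym2.eq_swap⟩
      · exact ⟨a, b, ⟨⟨ha, hca⟩, hb, by simpa [hca] using (Ne.symm hab)⟩, rfl⟩
  calc _ ≤ #((L ×ˢ R).image fun p => s(p.1, p.2)) := card_le_card hsub
    _ ≤ #L * #R := card_image_le.trans (card_product _ _).le
    _ ≤ 2 := by
      have : #L ≤ 3 := by omega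
      interval_cases #L <;> omega

end Finset

theorem HasK3Decomposition.card_filter_not_isDiag_map_le_two_mul {V : Type*} [Fintype V]
    [DecidableEq V] {G : SimpleGraph V} [DecidableRel G.Adj] (hG : HasK3Decomposition G)
    (c : V → Bool) :
    #{e ∈ G.edgeFinset | ¬(e.map c).IsDiag} ≤
      2 * #{e ∈ G.edgeFinset | (e.map c).IsDiag} := by
  obtain ⟨T, hT, hcover⟩ := hG
  choose! tri htriT htri using fun e (he : e ∈ G.edgeSet) => (hcover e he).exists
  have tri_eq {e : Sym2 V} (he : e ∈ G.edgeSet) {t : Finset V} (ht : t ∈ T)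
      (het : ∀ v ∈ e, v ∈ t) : tri e = t :=
    (hcover e he).unique ⟨htriT e he, htri e he⟩ ⟨ht, het⟩
  set cross := {e ∈ G.edgeFinset | ¬(e.map c).IsDiag}
  calc #cross ≤ 2 * #(cross.image tri) := by
        refine card_le_mul_card_image _ 2 fun t ht => ?_
        obtain ⟨e₀, he₀, rfl⟩ := mem_image.1 ht
        simp only [cross, mem_filter, mem_edgeFinset] at he₀
        refine le_trans (card_le_card fun e he => ?_)
          (card_filter_sym2_not_isDiag_map_le_two (hT _ (htriT e₀ he₀.1)).card_eq c)
        simp only [cross, mem_filter, mem_edgeFinset] at he ⊢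
        obtain ⟨⟨he, hcross⟩, htri_eq⟩ := he
        exact ⟨htri_eq ▸ mem_sym2_iff.2 (htri e he), hcross⟩
    _ ≤ 2 * #{e ∈ G.edgeFinset | (e.map c).IsDiag} := by
        gcongr
        refine card_le_card_of_surjOn tri fun t ht => ?_
        obtain ⟨e, he, rfl⟩ := mem_image.1 ht
        simp only [cross, mem_filter, mem_edgeFinset] at he
        have htT := htriT e he.1
        have hpigeon : #(univ : Finset Bool) < #(tri e) := by simp [(hT _ htT).card_eq]
        obtain ⟨a, ha, b, hb, hab, hcab⟩ :=
          exists_ne_map_eq_of_card_lt_of_maps_to hpigeon (f := c) (by simp [Set.MapsTo])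
        have hadj : G.Adj a b := (hT _ htT).isClique ha hb hab
        refine ⟨s(a, b), by simpa [cross, hcab] using hadj, ?_⟩
        exact tri_eq hadj (htriT e he.1) (by simpa using ⟨ha, hb⟩)

theorem SimpleGraph.card_mul_card_le_card_filter_not_isDiag_map_isLeft {α β : Type*} [Fintype α]
    [Fintype β] {G : SimpleGraph (α ⊕ β)} [DecidableRel G.Adj]
    (h : ∀ x y, G.Adj (.inl x) (.inr y)) :
    Fintype.card α * Fintype.card β ≤ #{e ∈ G.edgeFinset | ¬(e.map Sum.isLeft).IsDiag} := by
  rw [← Fintype.card_prod, ← card_univ]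
  refine card_le_card_of_injOn (fun p => s(.inl p.1, .inr p.2)) (fun p _ => ?_)
    fun p _ q _ hpq => ?_
  · simpa using h p.1 p.2
  · simpa [Sym2.eq_iff, Prod.ext_iff] using hpq

/-- Let `G₁`, `G₂` be vertex-disjoint `(6k+2)`-regular graphs on `12k+6` vertices each,
let `G₃` be the complete bipartite graph between them and `G := G₁ ∪ G₂ ∪ G₃`, a graph
on `n = 24k+12` vertices. Then `G` is `K₃`-divisible, `δ(G) = 3n/4 − 1`, and `G` has no
`K₃`-decomposition. -/
theorem extremal_example (k : ℕ) (G₁ G₂ : SimpleGraph (Fin (12 * k + 6)))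
    (hreg1 : ∀ v, (G₁.neighborSet v).ncard = 6 * k + 2)
    (hreg2 : ∀ v, (G₂.neighborSet v).ncard = 6 * k + 2) :
    K3Divisible (extremalGraph k G₁ G₂) ∧
    (∀ v, 3 * (24 * k + 12) / 4 - 1 ≤ ((extremalGraph k G₁ G₂).neighborSet v).ncard) ∧
    (∃ v, ((extremalGraph k G₁ G₂).neighborSet v).ncard = 3 * (24 * k + 12) / 4 - 1) ∧
    ¬ HasK3Decomposition (extremalGraph k G₁ G₂) := by
  classical
  set G := extremalGraph k G₁ G₂
  have hdeg := ncard_neighborSet_extremalGraph hreg1 hreg2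
  have hedges : #G.edgeFinset = (12 * k + 6) * (18 * k + 8) := by
    have := two_mul_ncard_edgeSet_of_forall_ncard_neighborSet_eq hdeg
    rw [← coe_edgeFinset, Set.ncard_coe_finset] at this
    simp only [Fintype.card_sum, Fintype.card_fin] at this
    linarith
  refine ⟨⟨?_, fun v => ⟨9 * k + 4, by rw [hdeg]; ring⟩⟩, fun v => by rw [hdeg]; omega,
    ⟨.inl ⟨0, by omega⟩, by rw [hdeg]; omega⟩, fun hG => ?_⟩
  · rw [← coe_edgeFinset, Set.ncard_coe_finset, hedges]
    exact ⟨(4 * k + 2) * (18 * k + 8), by ring⟩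
  have hcross := card_mul_card_le_card_filter_not_isDiag_map_isLeft (G := G)
    fun _ _ => extremalGraph_adj_inl_inr
  have hsplit := card_filter_add_card_filter_not (s := G.edgeFinset)
    fun e => (e.map Sum.isLeft).IsDiag
  simp only [Fintype.card_fin] at hcross
  have hdecomp := hG.card_filter_not_isDiag_map_le_two_mul Sum.isLeft
  nlinarith
end

section
/- For every k ∈ ℕ the following holds. Let G₁ and G₂ be vertex-disjoint (6k+2)-regular graphs, each on 12k+6 vertices, let G₃ be the complete bipartite graph between V(G₁) and V(G₂), and let G := G₁ ∪ G₂ ∪ G₃. Then G has no fractional K₃-decomposition. -/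
/-- A fractional `K₃`-decomposition of `G`: a weighting `ω` of the triangles of `G`
with values in `[0,1]` such that for every edge `e` of `G` the total weight of the
triangles containing `e` equals `1`. -/
def HasFractionalK3Decomposition {V : Type*} (G : SimpleGraph V) : Prop :=
  ∃ ω : Finset V → ℝ,
    (∀ t, G.IsNClique 3 t → 0 ≤ ω t ∧ ω t ≤ 1) ∧
    ∀ e ∈ G.edgeSet,
      ∑ᶠ t ∈ {t : Finset V | G.IsNClique 3 t ∧ ∀ v ∈ e, v ∈ t}, ω t = 1

section Aux

variable {k : ℕ} {G₁ G₂ : SimpleGraph (Fin (12 * k + 6))}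

lemma eg_adj_inl_inl (x y : Fin (12 * k + 6)) :
    (extremalGraph k G₁ G₂).Adj (Sum.inl x) (Sum.inl y) ↔ G₁.Adj x y := by
  simp only [extremalGraph, SimpleGraph.fromRel_adj, ne_eq, Sum.inl.injEq]
  constructor
  · rintro ⟨hne, h | h⟩ <;>
      rcases h with ⟨x', y', hx, hy, h⟩ | ⟨x', y', hx, hy, h⟩ | ⟨x', y', hx, hy⟩ <;>
      first
        | exact absurd hx (by simp)
        | exact absurd hy (by simp)
        | (cases hx; cases hy; first | exact h | exact h.symm)
  · intro h
    exact ⟨fun he => G₁.irrefl (he ▸ h), Or.inl (Or.inl ⟨x, y, rfl, rfl, h⟩)⟩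

lemma eg_adj_inr_inr (x y : Fin (12 * k + 6)) :
    (extremalGraph k G₁ G₂).Adj (Sum.inr x) (Sum.inr y) ↔ G₂.Adj x y := by
  simp only [extremalGraph, SimpleGraph.fromRel_adj, ne_eq, Sum.inr.injEq]
  constructor
  · rintro ⟨hne, h | h⟩ <;>
      rcases h with ⟨x', y', hx, hy, h⟩ | ⟨x', y', hx, hy, h⟩ | ⟨x', y', hx, hy⟩ <;>
      first
        | exact absurd hx (by simp)
        | exact absurd hy (by simp)
        | (cases hx; cases hy; first | exact h | exact h.symm)
  · intro h
    exact ⟨fun he => G₂.irrefl (he ▸ h), Or.inl (Or.inr (Or.inl ⟨x, y, rfl, rfl, h⟩))⟩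

lemma eg_adj_inl_inr (x y : Fin (12 * k + 6)) :
    (extremalGraph k G₁ G₂).Adj (Sum.inl x) (Sum.inr y) := by
  simp only [extremalGraph, SimpleGraph.fromRel_adj, ne_eq]
  exact ⟨by simp, Or.inl (Or.inr (Or.inr ⟨x, y, rfl, rfl⟩))⟩

lemma eg_adj_inr_inl (x y : Fin (12 * k + 6)) :
    (extremalGraph k G₁ G₂).Adj (Sum.inr x) (Sum.inl y) :=
  (eg_adj_inl_inr y x).symm

end Aux

/-- The edge weighting: `2` on edges inside a part, `-1` on crossing edges. -/
noncomputable def cw {α β : Type*} (u v : α ⊕ β) : ℝ :=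
  if u.isLeft = v.isLeft then 2 else -1

lemma cw_symm {α β : Type*} (u v : α ⊕ β) : cw u v = cw v u := by
  simp [cw, eq_comm]

lemma cw_sum_nonneg {α β : Type*} (a b c : α ⊕ β) :
    0 ≤ cw a b + cw a c + cw b c := by
  rcases a with a | a <;> rcases b with b | b <;> rcases c with c | c <;>
    simp [cw] <;> norm_num

set_option maxHeartbeats 1000000 in
/-- Let `G₁`, `G₂` be vertex-disjoint `(6k+2)`-regular graphs on `12k+6` vertices each,
let `G₃` be the complete bipartite graph between them and `G := G₁ ∪ G₂ ∪ G₃`. Then `G`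
has no fractional `K₃`-decomposition. -/
theorem extremal_example_fractional (k : ℕ)
    (G₁ G₂ : SimpleGraph (Fin (12 * k + 6)))
    (hreg1 : ∀ v, (G₁.neighborSet v).ncard = 6 * k + 2)
    (hreg2 : ∀ v, (G₂.neighborSet v).ncard = 6 * k + 2) :
    ¬ HasFractionalK3Decomposition (extremalGraph k G₁ G₂) := by
  classical
  rintro ⟨ω, hω01, hωe⟩
  set T : Finset (Finset (Fin (12 * k + 6) ⊕ Fin (12 * k + 6))) :=
    Finset.univ.filter (fun t => (extremalGraph k G₁ G₂).IsNClique 3 t) with hT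
  set D : Finset ((Fin (12 * k + 6) ⊕ Fin (12 * k + 6)) × (Fin (12 * k + 6) ⊕ Fin (12 * k + 6))) :=
    Finset.univ.filter (fun p => (extremalGraph k G₁ G₂).Adj p.1 p.2) with hD
  -- each edge constraint, for an ordered adjacent pair
  have hconstraint : ∀ p ∈ D, ∑ t ∈ T.filter (fun t => p.1 ∈ t ∧ p.2 ∈ t), ω t = 1 := by
    rintro ⟨a, b⟩ hp
    have hadj : (extremalGraph k G₁ G₂).Adj a b := by simpa [hD] using hp
    have he := hωe s(a, b) (by simpa using hadj)
    have hset : {t : Finset (Fin (12 * k + 6) ⊕ Fin (12 * k + 6)) |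
        (extremalGraph k G₁ G₂).IsNClique 3 t ∧ ∀ v ∈ s(a, b), v ∈ t}
        = ↑(T.filter (fun t => a ∈ t ∧ b ∈ t)) := by
      ext t
      simp [hT, Sym2.mem_iff, forall_eq_or_imp, and_assoc]
    rw [hset, finsum_mem_coe_finset] at he
    exact he
  -- double counting
  have hswap :
      ∑ p ∈ D, cw p.1 p.2
        = ∑ t ∈ T, ∑ p ∈ D.filter (fun p => p.1 ∈ t ∧ p.2 ∈ t), cw p.1 p.2 * ω t := by
    calc ∑ p ∈ D, cw p.1 p.2
        = ∑ p ∈ D, ∑ t ∈ T.filter (fun t => p.1 ∈ t ∧ p.2 ∈ t), cw p.1 p.2 * ω t := by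
          refine Finset.sum_congr rfl fun p hp => ?_
          rw [← Finset.mul_sum, hconstraint p hp, mul_one]
      _ = _ := Finset.sum_comm' (fun p t => by
            simp only [Finset.mem_filter, Finset.mem_univ, true_and, hT, hD]; tauto)
  -- each triangle contributes a nonnegative amount
  have htri : ∀ t ∈ T, 0 ≤ ∑ p ∈ D.filter (fun p => p.1 ∈ t ∧ p.2 ∈ t), cw p.1 p.2 * ω t := by
    intro t ht
    have hclique : (extremalGraph k G₁ G₂).IsNClique 3 t := by
      simpa [hT] using ht
    have hωt := (hω01 t hclique).1
    obtain ⟨a, b, c, hab, hac, hbc, habc⟩ := Finset.card_eq_three.mp hclique.card_eq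
    subst habc
    have hfilter : D.filter (fun p => p.1 ∈ ({a, b, c} : Finset _) ∧ p.2 ∈ ({a, b, c} : Finset _))
        = ((({a, b, c} : Finset _)) ×ˢ (({a, b, c} : Finset _))).filter (fun p => p.1 ≠ p.2) := by
      ext ⟨x, y⟩
      simp only [Finset.mem_filter, Finset.mem_product, Finset.mem_univ, true_and, hD, ne_eq]
      constructor
      · rintro ⟨hadj, hx, hy⟩
        exact ⟨⟨hx, hy⟩, hadj.ne⟩
      · rintro ⟨⟨hx, hy⟩, hne⟩
        exact ⟨hclique.1 (by simpa using hx) (by simpa using hy) hne, hx, hy⟩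
    rw [hfilter, Finset.sum_filter, Finset.sum_product]
    have h1 : a ∉ ({b, c} : Finset _) := by simp [hab, hac]
    have h2 : b ∉ ({c} : Finset _) := by simp [hbc]
    have hba := hab.symm
    have hca := hac.symm
    have hcb := hbc.symm
    simp only [Finset.sum_insert h1, Finset.sum_insert h2, Finset.sum_singleton, ne_eq,
      hab, hac, hbc, hba, hca, hcb, not_false_eq_true, if_true, not_true_eq_false,
      not_not, if_neg, ite_true, ite_false]
    rw [cw_symm b a, cw_symm c a, cw_symm c b]
    have hsum := cw_sum_nonneg a b c
    have key := mul_nonneg hsum hωt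
    linarith [key]
  have hpos : 0 ≤ ∑ p ∈ D, cw p.1 p.2 := hswap ▸ Finset.sum_nonneg htri
  -- now compute the total
  have hcard1 : ∀ x, (Finset.univ.filter (fun y => G₁.Adj x y)).card = 6 * k + 2 := by
    intro x
    have h := hreg1 x
    rwa [show G₁.neighborSet x = ↑(Finset.univ.filter (fun y => G₁.Adj x y)) by
        ext y; simp, Set.ncard_coe_finset] at h
  have hcard2 : ∀ x, (Finset.univ.filter (fun y => G₂.Adj x y)).card = 6 * k + 2 := by
    intro x
    have h := hreg2 x
    rwa [show G₂.neighborSet x = ↑(Finset.univ.filter (fun y => G₂.Adj x y)) by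
        ext y; simp, Set.ncard_coe_finset] at h
  have hrow : ∀ a : Fin (12 * k + 6) ⊕ Fin (12 * k + 6),
      ∑ b : Fin (12 * k + 6) ⊕ Fin (12 * k + 6),
        (if (extremalGraph k G₁ G₂).Adj a b then cw a b else 0) = -2 := by
    intro a
    rw [Fintype.sum_sum_type]
    rcases a with x | x
    · have hA : ∑ y : Fin (12 * k + 6),
          (if (extremalGraph k G₁ G₂).Adj (Sum.inl x) (Sum.inl y)
            then cw (Sum.inl x : Fin (12 * k + 6) ⊕ Fin (12 * k + 6)) (Sum.inl y) else 0) = 2 * ((6 : ℝ) * k + 2) := by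
        simp only [eg_adj_inl_inl, cw, Sum.isLeft_inl, if_true]
        rw [← Finset.sum_filter, Finset.sum_const, hcard1 x, nsmul_eq_mul]
        push_cast
        ring
      have hB : ∑ y : Fin (12 * k + 6),
          (if (extremalGraph k G₁ G₂).Adj (Sum.inl x) (Sum.inr y)
            then cw (Sum.inl x : Fin (12 * k + 6) ⊕ Fin (12 * k + 6)) (Sum.inr y) else 0) = -((12 : ℝ) * k + 6) := by
        have : ∀ y, (if (extremalGraph k G₁ G₂).Adj (Sum.inl x) (Sum.inr y)
            then cw (Sum.inl x : Fin (12 * k + 6) ⊕ Fin (12 * k + 6)) (Sum.inr y) else 0) = (-1 : ℝ) := by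
          intro y
          rw [if_pos (eg_adj_inl_inr x y)]
          simp [cw]
        rw [Finset.sum_congr rfl fun y _ => this y, Finset.sum_const, Finset.card_univ,
          Fintype.card_fin, nsmul_eq_mul]
        push_cast
        ring
      rw [hA, hB]
      ring
    · have hA : ∑ y : Fin (12 * k + 6),
          (if (extremalGraph k G₁ G₂).Adj (Sum.inr x) (Sum.inl y)
            then cw (Sum.inr x : Fin (12 * k + 6) ⊕ Fin (12 * k + 6)) (Sum.inl y) else 0) = -((12 : ℝ) * k + 6) := by
        have : ∀ y, (if (extremalGraph k G₁ G₂).Adj (Sum.inr x) (Sum.inl y)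
            then cw (Sum.inr x : Fin (12 * k + 6) ⊕ Fin (12 * k + 6)) (Sum.inl y) else 0) = (-1 : ℝ) := by
          intro y
          rw [if_pos (eg_adj_inr_inl x y)]
          simp [cw]
        rw [Finset.sum_congr rfl fun y _ => this y, Finset.sum_const, Finset.card_univ,
          Fintype.card_fin, nsmul_eq_mul]
        push_cast
        ring
      have hB : ∑ y : Fin (12 * k + 6),
          (if (extremalGraph k G₁ G₂).Adj (Sum.inr x) (Sum.inr y)
            then cw (Sum.inr x : Fin (12 * k + 6) ⊕ Fin (12 * k + 6)) (Sum.inr y) else 0) = 2 * ((6 : ℝ) * k + 2) := by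
        simp only [eg_adj_inr_inr, cw, Sum.isLeft_inr, if_true]
        rw [← Finset.sum_filter, Finset.sum_const, hcard2 x, nsmul_eq_mul]
        push_cast
        ring
      rw [hA, hB]
      ring
  have htotal : ∑ p ∈ D, cw p.1 p.2 = -(2 * (2 * ((12 : ℝ) * k + 6))) := by
    calc ∑ p ∈ D, cw p.1 p.2
        = ∑ p : (Fin (12 * k + 6) ⊕ Fin (12 * k + 6)) × (Fin (12 * k + 6) ⊕ Fin (12 * k + 6)),
            (if (extremalGraph k G₁ G₂).Adj p.1 p.2 then cw p.1 p.2 else 0) := by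
          rw [hD, Finset.sum_filter]
      _ = ∑ a : Fin (12 * k + 6) ⊕ Fin (12 * k + 6),
            ∑ b : Fin (12 * k + 6) ⊕ Fin (12 * k + 6),
              (if (extremalGraph k G₁ G₂).Adj a b then cw a b else 0) := by
          rw [Fintype.sum_prod_type]
      _ = ∑ _a : Fin (12 * k + 6) ⊕ Fin (12 * k + 6), (-2 : ℝ) :=
          Finset.sum_congr rfl fun a _ => hrow a
      _ = -(2 * (2 * ((12 : ℝ) * k + 6))) := by
          rw [Finset.sum_const, Finset.card_univ, Fintype.card_sum, Fintype.card_fin,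
            nsmul_eq_mul]
          push_cast
          ring
  rw [htotal] at hpos
  have hk : (0 : ℝ) < 2 * (2 * ((12 : ℝ) * k + 6)) := by positivity
  linarith
end

section
/- Let G be a graph, let e be an edge of G, and let J be a copy of K₅ in G containing e. Define ψ_{e,J} on the triangles of G by: ψ_{e,J}(T) := 1/3 if T ⊆ J and |V(T) ∩ e| ∈ {0, 2}; ψ_{e,J}(T) := −1/6 if T ⊆ J and |V(T) ∩ e| = 1; and ψ_{e,J}(T) := 0 if T ⊄ J. Then for every edge e′ of G, the sum of ψ_{e,J}(T) over all triangles T of G containing e′ equals 1 if e′ = e, and equals 0 otherwise. -/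
open Finset

/-- The `K₅`-shifter identity: let `e` be an edge of `G` and `J` a copy of `K₅` in `G`
containing `e`. Define `ψ` on the triangles of `G` by `ψ(T) := 1/3` if `T ⊆ J` and
`|V(T) ∩ e| ∈ {0,2}`, `ψ(T) := −1/6` if `T ⊆ J` and `|V(T) ∩ e| = 1`, and `ψ(T) := 0`
if `T ⊄ J`. Then for every edge `e'` of `G`, the sum of `ψ(T)` over all triangles `T`
of `G` containing `e'` equals `1` if `e' = e` and `0` otherwise. -/
theorem k5_shifter {V : Type*} [Fintype V] [DecidableEq V]
    (G : SimpleGraph V) (e : Sym2 V) (he : e ∈ G.edgeSet)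
    (J : Finset V) (hJ : G.IsNClique 5 J) (heJ : ∀ v ∈ e, v ∈ J)
    (ψ : Finset V → ℝ)
    (hψ02 : ∀ t : Finset V, G.IsNClique 3 t → t ⊆ J →
      ((t.filter (fun v => v ∈ e)).card = 0 ∨ (t.filter (fun v => v ∈ e)).card = 2) →
      ψ t = 1 / 3)
    (hψ1 : ∀ t : Finset V, G.IsNClique 3 t → t ⊆ J →
      (t.filter (fun v => v ∈ e)).card = 1 → ψ t = -(1 / 6))
    (hψ0 : ∀ t : Finset V, G.IsNClique 3 t → ¬ t ⊆ J → ψ t = 0) :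
    ∀ e' ∈ G.edgeSet,
      ∑ᶠ t ∈ {t : Finset V | G.IsNClique 3 t ∧ ∀ v ∈ e', v ∈ t}, ψ t =
        if e' = e then 1 else 0 := by
  classical
  revert he heJ hψ02 hψ1
  induction e using Sym2.ind with
  | _ x y =>
  intro he heJ hψ02 hψ1 e' he'
  revert he'
  induction e' using Sym2.ind with
  | _ a b =>
  intro he'
  have hxy : G.Adj x y := he
  have hab : G.Adj a b := he'
  have hxyne : x ≠ y := hxy.ne
  have habne : a ≠ b := hab.ne
  have hxJ : x ∈ J := heJ x (by simp)
  have hyJ : y ∈ J := heJ y (by simp)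
  -- rewrite the filter predicate as intersection with {x, y}
  have hfil : ∀ t : Finset V, t.filter (fun v => v ∈ (s(x, y) : Sym2 V)) = t ∩ {x, y} := by
    intro t
    ext v
    simp only [mem_filter, Sym2.mem_iff, mem_inter, mem_insert, mem_singleton]
  have hmemab : ∀ t : Finset V, (∀ v ∈ (s(a, b) : Sym2 V), v ∈ t) ↔ a ∈ t ∧ b ∈ t := by
    intro t
    constructor
    · intro h; exact ⟨h a (by simp), h b (by simp)⟩
    · rintro ⟨h1, h2⟩ v hv
      rcases Sym2.mem_iff.1 hv with rfl | rfl <;> assumption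
  have hsetS :
      {t : Finset V | G.IsNClique 3 t ∧ ∀ v ∈ (s(a, b) : Sym2 V), v ∈ t} =
        ↑(univ.filter fun t : Finset V => G.IsNClique 3 t ∧ a ∈ t ∧ b ∈ t) := by
    ext t
    simp [hmemab t]
  rw [hsetS, finsum_mem_coe_finset]
  set S := univ.filter (fun t : Finset V => G.IsNClique 3 t ∧ a ∈ t ∧ b ∈ t) with hSdef
  -- helper interchip lemmas about intersections with {x, y}
  have hint2 : ∀ t : Finset V, x ∈ t → y ∈ t → t ∩ {x, y} = {x, y} := by
    intro t hx hy
    apply inter_eq_right.mpr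
    intro v hv
    rcases mem_insert.1 hv with rfl | hv
    · exact hx
    · rw [mem_singleton.1 hv]; exact hy
  have hint1x : ∀ t : Finset V, x ∈ t → y ∉ t → t ∩ {x, y} = {x} := by
    intro t hx hy
    ext v
    simp only [mem_inter, mem_insert, mem_singleton]
    constructor
    · rintro ⟨hv, rfl | rfl⟩
      · rfl
      · exact absurd hv hy
    · rintro rfl; exact ⟨hx, Or.inl rfl⟩
  have hint1y : ∀ t : Finset V, x ∉ t → y ∈ t → t ∩ {x, y} = {y} := by
    intro t hx hy
    ext v
    simp only [mem_inter, mem_insert, mem_singleton]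
    constructor
    · rintro ⟨hv, rfl | rfl⟩
      · exact absurd hv hx
      · rfl
    · rintro rfl; exact ⟨hy, Or.inr rfl⟩
  have hint0 : ∀ t : Finset V, x ∉ t → y ∉ t → t ∩ {x, y} = ∅ := by
    intro t hx hy
    ext v
    simp only [mem_inter, mem_insert, mem_singleton, notMem_empty, iff_false, not_and]
    rintro hv (rfl | rfl)
    · exact hx hv
    · exact hy hv
  by_cases hJab : a ∈ J ∧ b ∈ J
  · obtain ⟨haJ, hbJ⟩ := hJab
    have habs : ({a, b} : Finset V) ⊆ J := by
      intro v hv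
      rcases mem_insert.1 hv with rfl | hv
      · exact haJ
      · rw [mem_singleton.1 hv]; exact hbJ
    -- drop triangles not inside J
    have hsum1 : ∑ t ∈ S.filter (· ⊆ J), ψ t = ∑ t ∈ S, ψ t := by
      apply Finset.sum_filter_of_ne
      intro t ht hne
      by_contra hsub
      exact hne (hψ0 t ((mem_filter.1 ht).2.1) hsub)
    rw [← hsum1]
    -- identify the remaining triangles
    have himg : S.filter (· ⊆ J) = (J \ {a, b}).image (fun c => insert c {a, b}) := by
      ext t
      simp only [hSdef, mem_filter, mem_univ, true_and, mem_image, mem_sdiff]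
      constructor
      · rintro ⟨⟨hcl, hat, hbt⟩, hsub⟩
        have habt : ({a, b} : Finset V) ⊆ t := by
          intro v hv
          rcases mem_insert.1 hv with rfl | hv
          · exact hat
          · rw [mem_singleton.1 hv]; exact hbt
        have hc1 : (t \ {a, b}).card = 1 := by
          rw [card_sdiff_of_subset habt, hcl.2, card_pair habne]
        obtain ⟨c, hc⟩ := card_eq_one.1 hc1
        have hct : c ∈ t \ {a, b} := hc ▸ mem_singleton_self c
        refine ⟨c, ⟨hsub (mem_sdiff.1 hct).1, (mem_sdiff.1 hct).2⟩, ?_⟩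
        have h2 := sdiff_union_of_subset habt
        rw [hc] at h2
        rw [← h2]
        ext v
        simp only [mem_union, mem_singleton, mem_insert]
      · rintro ⟨c, ⟨hcJ, hcab⟩, rfl⟩
        have hsub : insert c {a, b} ⊆ J := by
          intro v hv
          rcases mem_insert.1 hv with rfl | hv
          · exact hcJ
          · exact habs hv
        refine ⟨⟨⟨hJ.1.subset ?_, ?_⟩, ?_, ?_⟩, hsub⟩
        · intro v hv
          exact_mod_cast hsub (by exact_mod_cast hv)
        · rw [card_insert_of_notMem hcab, card_pair habne]
        · exact mem_insert_of_mem (mem_insert_self a {b})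
        · exact mem_insert_of_mem (mem_insert_of_mem (mem_singleton_self b))
    rw [himg, Finset.sum_image (by
      intro c hc c' hc' hcc
      have : c ∈ insert c' ({a, b} : Finset V) := (show insert c ({a, b} : Finset V) = insert c' {a, b} from hcc) ▸ mem_insert_self c {a, b}
      rcases mem_insert.1 this with rfl | hmem
      · rfl
      · exact absurd hmem (mem_sdiff.1 hc).2)]
    -- basic facts about each triangle T c = insert c {a,b}, c ∈ J \ {a,b}
    have hTsub : ∀ c ∈ J \ ({a, b} : Finset V), insert c {a, b} ⊆ J := by
      intro c hc v hv
      rcases mem_insert.1 hv with rfl | hv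
      · exact (mem_sdiff.1 hc).1
      · exact habs hv
    have hTcl : ∀ c ∈ J \ ({a, b} : Finset V), G.IsNClique 3 (insert c {a, b}) := by
      intro c hc
      refine ⟨hJ.1.subset ?_, ?_⟩
      · intro v hv
        exact_mod_cast hTsub c hc (by exact_mod_cast hv)
      · rw [card_insert_of_notMem (mem_sdiff.1 hc).2, card_pair habne]
    have hcardJab : (J \ ({a, b} : Finset V)).card = 3 := by
      rw [card_sdiff_of_subset habs, hJ.2, card_pair habne]
    by_cases heq : (s(a, b) : Sym2 V) = s(x, y)
    · rw [if_pos heq]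
      -- {a,b} = {x,y}, each triangle gets 1/3
      have habxy : ({a, b} : Finset V) = {x, y} := by
        rcases Sym2.eq_iff.1 heq with ⟨rfl, rfl⟩ | ⟨rfl, rfl⟩
        · rfl
        · ext v; simp only [mem_insert, mem_singleton]; tauto
      have hxab2 : x ∈ ({a, b} : Finset V) := by
        rw [habxy]; exact mem_insert_self _ _
      have hyab2 : y ∈ ({a, b} : Finset V) := by
        rw [habxy]; exact mem_insert_of_mem (mem_singleton_self _)
      have hval : ∀ c ∈ J \ ({a, b} : Finset V), ψ (insert c {a, b}) = 1 / 3 := by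
        intro c hc
        apply hψ02 _ (hTcl c hc) (hTsub c hc)
        right
        rw [hfil, hint2, card_pair hxyne]
        · exact mem_insert_of_mem hxab2
        · exact mem_insert_of_mem hyab2
      rw [Finset.sum_congr rfl hval, Finset.sum_const, hcardJab]
      norm_num
    · rw [if_neg heq]
      -- not both x and y lie in {a,b}
      by_cases hx : x = a ∨ x = b
      · by_cases hy : y = a ∨ y = b
        · exfalso
          apply heq
          rcases hx with rfl | rfl
          · rcases hy with rfl | rfl
            · exact absurd rfl hxyne
            · rfl
          · rcases hy with rfl | rfl
            · exact Sym2.eq_swap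
            · exact absurd rfl hxyne
        · -- x ∈ {a,b}, y ∉ {a,b}; so y ∈ J\{a,b}
          have hxab : x ∈ ({a, b} : Finset V) := by
            rcases hx with rfl | rfl
            · exact mem_insert_self _ _
            · exact mem_insert_of_mem (mem_singleton_self _)
          have hyab : y ∉ ({a, b} : Finset V) := by
            simp only [mem_insert, mem_singleton]; exact hy
          have hyJ' : y ∈ J \ ({a, b} : Finset V) := mem_sdiff.2 ⟨hyJ, hyab⟩
          set R := (J \ ({a, b} : Finset V)).erase y with hRdef
          have hRcard : R.card = 2 := by
            rw [hRdef, card_erase_of_mem hyJ', hcardJab]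
          obtain ⟨z, w, hzw, hR⟩ := card_eq_two.1 hRcard
          have hdecomp : J \ ({a, b} : Finset V) = insert y R :=
            (insert_erase hyJ').symm
          have hzmem : z ∈ J \ ({a, b} : Finset V) :=
            erase_subset _ _ (hR ▸ mem_insert_self z {w})
          have hwmem : w ∈ J \ ({a, b} : Finset V) :=
            erase_subset _ _ (hR ▸ mem_insert_of_mem (mem_singleton_self w))
          have hval1 : ∀ c ∈ R, ψ (insert c {a, b}) = -(1 / 6) := by
            intro c hcR
            have hc : c ∈ J \ ({a, b} : Finset V) := erase_subset _ _ hcR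
            apply hψ1 _ (hTcl c hc) (hTsub c hc)
            rw [hfil, hint1x, card_singleton]
            · exact mem_insert_of_mem hxab
            · intro hyt
              rcases mem_insert.1 hyt with rfl | hyt
              · exact (ne_of_mem_erase hcR) rfl
              · exact hyab hyt
          have hvaly : ψ (insert y {a, b}) = 1 / 3 := by
            apply hψ02 _ (hTcl y hyJ') (hTsub y hyJ')
            right
            rw [hfil, hint2, card_pair hxyne]
            · exact mem_insert_of_mem hxab
            · exact mem_insert_self _ _
          rw [hdecomp, Finset.sum_insert (by rw [hRdef]; exact notMem_erase _ _), hR,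
            Finset.sum_insert (by simpa using hzw), Finset.sum_singleton,
            hvaly, hval1 z (hR ▸ mem_insert_self z {w}),
            hval1 w (hR ▸ mem_insert_of_mem (mem_singleton_self w))]
          norm_num
      · by_cases hy : y = a ∨ y = b
        · -- y ∈ {a,b}, x ∉ {a,b}
          have hyab : y ∈ ({a, b} : Finset V) := by
            rcases hy with rfl | rfl
            · exact mem_insert_self _ _
            · exact mem_insert_of_mem (mem_singleton_self _)
          have hxab : x ∉ ({a, b} : Finset V) := by
            simp only [mem_insert, mem_singleton]; exact hx
          have hxJ' : x ∈ J \ ({a, b} : Finset V) := mem_sdiff.2 ⟨hxJ, hxab⟩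
          set R := (J \ ({a, b} : Finset V)).erase x with hRdef
          have hRcard : R.card = 2 := by
            rw [hRdef, card_erase_of_mem hxJ', hcardJab]
          obtain ⟨z, w, hzw, hR⟩ := card_eq_two.1 hRcard
          have hdecomp : J \ ({a, b} : Finset V) = insert x R :=
            (insert_erase hxJ').symm
          have hval1 : ∀ c ∈ R, ψ (insert c {a, b}) = -(1 / 6) := by
            intro c hcR
            have hc : c ∈ J \ ({a, b} : Finset V) := erase_subset _ _ hcR
            apply hψ1 _ (hTcl c hc) (hTsub c hc)
            rw [hfil, hint1y, card_singleton]
            · intro hxt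
              rcases mem_insert.1 hxt with rfl | hxt
              · exact (ne_of_mem_erase hcR) rfl
              · exact hxab hxt
            · exact mem_insert_of_mem hyab
          have hvalx : ψ (insert x {a, b}) = 1 / 3 := by
            apply hψ02 _ (hTcl x hxJ') (hTsub x hxJ')
            right
            rw [hfil, hint2, card_pair hxyne]
            · exact mem_insert_self _ _
            · exact mem_insert_of_mem hyab
          rw [hdecomp, Finset.sum_insert (by rw [hRdef]; exact notMem_erase _ _), hR,
            Finset.sum_insert (by simpa using hzw), Finset.sum_singleton,
            hvalx, hval1 z (hR ▸ mem_insert_self z {w}),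
            hval1 w (hR ▸ mem_insert_of_mem (mem_singleton_self w))]
          norm_num
        · -- x, y ∉ {a, b}
          have hxab : x ∉ ({a, b} : Finset V) := by
            simp only [mem_insert, mem_singleton]; exact hx
          have hyab : y ∉ ({a, b} : Finset V) := by
            simp only [mem_insert, mem_singleton]; exact hy
          have hxJ' : x ∈ J \ ({a, b} : Finset V) := mem_sdiff.2 ⟨hxJ, hxab⟩
          have hyJ' : y ∈ J \ ({a, b} : Finset V) := mem_sdiff.2 ⟨hyJ, hyab⟩
          set R := ((J \ ({a, b} : Finset V)).erase x).erase y with hRdef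
          have hyex : y ∈ (J \ ({a, b} : Finset V)).erase x :=
            mem_erase.2 ⟨hxyne.symm, hyJ'⟩
          have hRcard : R.card = 1 := by
            rw [hRdef, card_erase_of_mem hyex, card_erase_of_mem hxJ', hcardJab]
          obtain ⟨z, hR⟩ := card_eq_one.1 hRcard
          have hzR : z ∈ R := hR ▸ mem_singleton_self z
          have hdecomp : J \ ({a, b} : Finset V) = insert x (insert y R) := by
            rw [hRdef, insert_erase hyex, insert_erase hxJ']
          have hzJ : z ∈ J \ ({a, b} : Finset V) :=
            erase_subset _ _ (erase_subset _ _ hzR)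
          have hvalx : ψ (insert x {a, b}) = -(1 / 6) := by
            apply hψ1 _ (hTcl x hxJ') (hTsub x hxJ')
            rw [hfil, hint1x, card_singleton]
            · exact mem_insert_self _ _
            · intro hyt
              rcases mem_insert.1 hyt with rfl | hyt
              · exact hxyne rfl
              · exact hyab hyt
          have hvaly : ψ (insert y {a, b}) = -(1 / 6) := by
            apply hψ1 _ (hTcl y hyJ') (hTsub y hyJ')
            rw [hfil, hint1y, card_singleton]
            · intro hxt
              rcases mem_insert.1 hxt with rfl | hxt
              · exact hxyne rfl
              · exact hxab hxt
            · exact mem_insert_self _ _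
          have hvalz : ψ (insert z {a, b}) = 1 / 3 := by
            apply hψ02 _ (hTcl z hzJ) (hTsub z hzJ)
            left
            rw [hfil, hint0, card_empty]
            · intro hxt
              rcases mem_insert.1 hxt with rfl | hxt
              · exact (mem_erase.1 (mem_of_mem_erase hzR)).1 rfl
              · exact hxab hxt
            · intro hyt
              rcases mem_insert.1 hyt with rfl | hyt
              · exact (mem_erase.1 hzR).1 rfl
              · exact hyab hyt
          have hxny : x ∉ insert y R := by
            rw [hRdef]
            intro hmem
            rcases mem_insert.1 hmem with rfl | hmem
            · exact hxyne rfl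
            · exact notMem_erase x _ (mem_of_mem_erase hmem)
          have hynR : y ∉ R := by rw [hRdef]; exact notMem_erase _ _
          rw [hdecomp, Finset.sum_insert hxny, Finset.sum_insert hynR, hR,
            Finset.sum_singleton, hvalx, hvaly, hvalz]
          norm_num
  · -- not both a, b ∈ J : sum is 0 and e' ≠ e
    have hne : (s(a, b) : Sym2 V) ≠ s(x, y) := by
      intro h
      apply hJab
      constructor
      · exact heJ a (h ▸ (by simp : a ∈ (s(a, b) : Sym2 V)))
      · exact heJ b (h ▸ (by simp : b ∈ (s(a, b) : Sym2 V)))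
    rw [if_neg hne]
    apply Finset.sum_eq_zero
    intro t ht
    obtain ⟨hcl, hat, hbt⟩ := (mem_filter.1 ht).2
    apply hψ0 t hcl
    intro hsub
    exact hJab ⟨hsub hat, hsub hbt⟩
end
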